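/- arXiv:math/0311515 — 4 statements merged into one kernel-verified Lean document; each statement's English description precedes it below -/
import Mathlib

section
/- For every polynomial p and every integer n ≥ 0, the identity (1 - t²) · (d/dt P_n(t)) = n · (P_{n-1}(t) - t · P_n(t)) holds for all real t, where P_n is the n-th Legendre polynomial (with the convention P_{-1} = 0 when n = 0). -/
/-!
With `u = (X² - 1)ⁿ⁺¹`, the relation `(X² - 1) u' = 2(n + 1) X u` differentiated `n + 1` times by
Leibniz' rule gives `(X² - 1) Pₙ₊₁' = (n + 1)(n + 2) Qₙ`, where `Qₙ` is the antiderivative of `Pₙ₊₁`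
obtained by dropping one derivative from Rodrigues' formula. Differentiating `(X² - 1)ⁿ⁺¹` once and
applying Leibniz' rule to the factor `X` gives the recurrences `Pₙ₊₁' = X Pₙ' + (n + 1) Pₙ` and
`Pₙ₊₂ = X Pₙ₊₁ + (n + 1) Qₙ`, and the identity follows by eliminating `Qₙ`.
-/

open Polynomial

/-- The `n`-th Legendre polynomial via Rodrigues' formula. -/
noncomputable def legendre (n : ℕ) : Polynomial ℝ :=
  Polynomial.C (1 / (2 ^ n * n.factorial : ℝ)) * derivative^[n] ((X ^ 2 - 1) ^ n)

namespace Polynomial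

section Leibniz

variable {R : Type*} [CommRing R]

theorem iterate_derivative_succ_X_mul (p : R[X]) (n : ℕ) :
    derivative^[n + 1] (X * p) = X * derivative^[n + 1] p + (n + 1 : R[X]) * derivative^[n] p := by
  rw [mul_comm, iterate_derivative_mul_X, Nat.add_sub_cancel, nsmul_eq_mul]
  push_cast
  ring

theorem iterate_derivative_succ_X_sq_sub_one_mul_derivative (p : R[X]) (n : ℕ) :
    derivative^[n + 1] ((X ^ 2 - 1) * derivative p)
      = (X ^ 2 - 1) * derivative^[n + 2] p + 2 * (n + 1 : R[X]) * X * derivative^[n + 1] p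
        + (n * (n + 1) : R[X]) * derivative^[n] p := by
  induction n with
  | zero =>
    simp only [Function.iterate_succ_apply', Function.iterate_zero_apply, derivative_mul,
      derivative_sub, derivative_X_sq, derivative_one, map_ofNat, Nat.cast_zero]
    ring
  | succ n ih =>
    rw [Function.iterate_succ_apply', ih]
    simp only [derivative_mul, derivative_add, derivative_sub, derivative_X_sq, derivative_X,
      derivative_one, derivative_ofNat, derivative_natCast, Nat.succ_eq_add_one, map_ofNat,
      ← Function.iterate_succ_apply' derivative]
    push_cast
    ring

theorem derivative_X_sq_sub_one_pow_succ (n : ℕ) :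
    derivative ((X ^ 2 - 1 : R[X]) ^ (n + 1)) = 2 * (n + 1 : R[X]) * X * (X ^ 2 - 1) ^ n := by
  rw [derivative_pow_succ, derivative_sub, derivative_X_sq, derivative_one, sub_zero, map_ofNat,
    C_add, C_1, C_eq_natCast]
  ring

theorem iterate_derivative_X_sq_sub_one_pow_succ (k n : ℕ) :
    derivative^[k + 2] ((X ^ 2 - 1 : R[X]) ^ (n + 1))
      = 2 * (n + 1 : R[X]) * (X * derivative^[k + 1] ((X ^ 2 - 1) ^ n)
        + (k + 1 : R[X]) * derivative^[k] ((X ^ 2 - 1) ^ n)) := by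
  have hcast : (2 * (n + 1) : R[X]) = ((2 * (n + 1) : ℕ) : R[X]) := by push_cast; ring
  rw [Function.iterate_succ_apply, derivative_X_sq_sub_one_pow_succ, hcast, mul_assoc,
    iterate_derivative_natCast_mul, iterate_derivative_succ_X_mul]

theorem X_sq_sub_one_mul_iterate_derivative_X_sq_sub_one_pow_succ (n : ℕ) :
    (X ^ 2 - 1) * derivative^[n + 2] ((X ^ 2 - 1 : R[X]) ^ (n + 1))
      = ((n + 1) * (n + 2) : R[X]) * derivative^[n] ((X ^ 2 - 1) ^ (n + 1)) := by
  have hode : (X ^ 2 - 1) * derivative ((X ^ 2 - 1 : R[X]) ^ (n + 1))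
      = ((2 * (n + 1) : ℕ) : R[X]) * (X * (X ^ 2 - 1) ^ (n + 1)) := by
    rw [derivative_X_sq_sub_one_pow_succ]
    push_cast
    ring
  have h := congrArg derivative^[n + 1] hode
  rw [iterate_derivative_succ_X_sq_sub_one_mul_derivative, iterate_derivative_natCast_mul,
    iterate_derivative_succ_X_mul] at h
  push_cast at h
  linear_combination h

end Leibniz

end Polynomial

theorem C_rodrigues_coeff_succ_mul (n : ℕ) :
    C (1 / (2 ^ (n + 1) * (n + 1).factorial : ℝ)) * (2 * (n + 1 : ℝ[X]))
      = C (1 / (2 ^ n * n.factorial : ℝ)) := by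
  have h : 1 / (2 ^ (n + 1) * (n + 1).factorial : ℝ) * (2 * (n + 1))
      = 1 / (2 ^ n * n.factorial) := by
    rw [Nat.factorial_succ, pow_succ]
    push_cast
    field_simp
  rw [← h, C_mul]
  simp [map_ofNat]

/-- An antiderivative of `legendre (n + 1)`. -/
noncomputable def legendreAntideriv (n : ℕ) : ℝ[X] :=
  C (1 / (2 ^ (n + 1) * (n + 1).factorial : ℝ)) * derivative^[n] ((X ^ 2 - 1) ^ (n + 1))

theorem legendre_zero : legendre 0 = 1 := by
  simp [legendre]

theorem derivative_legendre (n : ℕ) :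
    derivative (legendre n)
      = C (1 / (2 ^ n * n.factorial : ℝ)) * derivative^[n + 1] ((X ^ 2 - 1) ^ n) := by
  rw [legendre, derivative_C_mul, Function.iterate_succ_apply']

theorem derivative_legendre_succ (n : ℕ) :
    derivative (legendre (n + 1)) = X * derivative (legendre n) + (n + 1 : ℝ[X]) * legendre n := by
  rw [derivative_legendre, iterate_derivative_X_sq_sub_one_pow_succ, ← mul_assoc,
    C_rodrigues_coeff_succ_mul, derivative_legendre, legendre]
  ring

theorem legendre_one : legendre 1 = X := by
  have h := derivative_X_sq_sub_one_pow_succ (R := ℝ) 0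
  simp only [legendre, Function.iterate_one, zero_add, pow_one, pow_zero] at h ⊢
  rw [h, ← C_ofNat]
  simp [← C_mul, ← mul_assoc]

theorem legendre_succ_succ (n : ℕ) :
    legendre (n + 2) = X * legendre (n + 1) + (n + 1 : ℝ[X]) * legendreAntideriv n := by
  rw [legendre, iterate_derivative_X_sq_sub_one_pow_succ, ← mul_assoc,
    C_rodrigues_coeff_succ_mul (n + 1), legendre, legendreAntideriv]
  ring

theorem X_sq_sub_one_mul_derivative_legendre_succ (n : ℕ) :
    (X ^ 2 - 1) * derivative (legendre (n + 1))
      = ((n + 1) * (n + 2) : ℝ[X]) * legendreAntideriv n := by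
  rw [derivative_legendre, mul_left_comm, X_sq_sub_one_mul_iterate_derivative_X_sq_sub_one_pow_succ,
    legendreAntideriv]
  ring

theorem X_sq_sub_one_mul_derivative_legendre (n : ℕ) :
    (X ^ 2 - 1) * derivative (legendre (n + 1))
      = (n + 1 : ℝ[X]) * (X * legendre (n + 1) - legendre n) := by
  cases n with
  | zero =>
    simp only [zero_add, legendre_zero, legendre_one, derivative_X, Nat.cast_zero]
    ring
  | succ n =>
    rw [derivative_legendre_succ, legendre_succ_succ]
    push_cast
    linear_combination X * X_sq_sub_one_mul_derivative_legendre_succ n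

/-- `(1 - t²) Pₙ'(t) = n (P_{n-1}(t) - t Pₙ(t))` for all real `t` and `n ≥ 0`
(for `n = 0` the right-hand side vanishes, so the convention `P_{-1} = 0` is harmless). -/
theorem legendre_deriv_identity (n : ℕ) (t : ℝ) :
    (1 - t ^ 2) * (derivative (legendre n)).eval t
      = (n : ℝ) * ((legendre (n - 1)).eval t - t * (legendre n).eval t) := by
  cases n with
  | zero => simp [legendre_zero]
  | succ n =>
    have h := congrArg (eval t) (X_sq_sub_one_mul_derivative_legendre n)
    simp only [eval_mul, eval_sub, eval_pow, eval_X, eval_one, eval_add, eval_natCast] at h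
    rw [Nat.add_sub_cancel]
    push_cast
    linear_combination -h
end

section
/- For every integer n ≥ 0 and every real β > -1, 2 ∫_{0}^{1} P_{2n}(t) t^β dt = sqrt(π) · 2^{-β} · Γ(1+β) / ( Γ(1 - n + β/2) · Γ(β/2 + 3/2 + n) ). -/
open Polynomial Real

lemma legendre_eval (m : ℕ) (t : ℝ) :
    (legendre m).eval t
      = (1/(2^m * m.factorial : ℝ)) *
        ∑ k ∈ Finset.range (m+1),
          ((-1)^(k+m) * (m.choose k) * ((2*k).descFactorial m) : ℝ) * t^(2*k-m) := by
  have key : derivative^[m] (((X:ℝ[X])^2 - 1)^m)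
      = ∑ k ∈ Finset.range (m+1),
          (((-1)^(k+m) * (m.choose k) * ((2*k).descFactorial m) : ℝ)) • X^(2*k-m) := by
    rw [sub_pow, iterate_derivative_sum]
    refine Finset.sum_congr rfl fun k _ => ?_
    have h1 : ((-1):ℝ[X])^(k+m) * ((X:ℝ[X])^2)^k * 1^(m-k) * ((m.choose k : ℕ) : ℝ[X])
        = (((-1)^(k+m) * (m.choose k) : ℝ)) • (X:ℝ[X])^(2*k) := by
      simp [Polynomial.smul_eq_C_mul, ← pow_mul, mul_comm, mul_assoc]
    rw [h1, iterate_derivative_smul, iterate_derivative_X_pow_eq_smul, smul_smul]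
  rw [legendre, key]
  simp [Finset.mul_sum, eval_finset_sum]
  exact Finset.sum_congr rfl fun k _ => by ring

lemma int_pow_rpow (m : ℕ) (β : ℝ) (hβ : -1 < β) :
    ∫ t in (0:ℝ)..1, (t:ℝ)^m * t^β = 1/(β + m + 1) := by
  have h1 : Set.EqOn (fun t : ℝ => t^m * t^β) (fun t : ℝ => t^((m:ℝ)+β)) (Set.uIcc 0 1) := by
    intro t ht
    rcases eq_or_ne t 0 with rfl | h0
    · rcases Nat.eq_zero_or_pos m with rfl | hm
      · simp
      · have : (0:ℝ) < (m:ℝ) + β := by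
          have : (1:ℝ) ≤ m := by exact_mod_cast hm
          linarith
        simp [Real.zero_rpow (ne_of_gt this), zero_pow hm.ne']
    · have ht0 : 0 < t := by
        rcases (Set.uIcc_of_le (by norm_num : (0:ℝ) ≤ 1) ▸ ht : t ∈ Set.Icc (0:ℝ) 1) with ⟨h1', _⟩
        exact lt_of_le_of_ne h1' (Ne.symm h0)
      simp [Real.rpow_add ht0, Real.rpow_natCast]
  rw [intervalIntegral.integral_congr h1,
    integral_rpow (Or.inl (by push_cast; linarith : (-1:ℝ) < (m:ℝ)+β))]
  have hne : (m:ℝ) + β + 1 ≠ 0 := by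
    have : (0:ℝ) ≤ m := Nat.cast_nonneg m
    linarith
  rw [Real.one_rpow, Real.zero_rpow hne]
  ring

lemma sum_range_split (f : ℕ → ℝ) (a b : ℕ) :
    ∑ i ∈ Finset.range (a+b), f i = (∑ i ∈ Finset.range a, f i) + ∑ i ∈ Finset.range b, f (a+i) := by
  induction b with
  | zero => simp
  | succ b ih => rw [← Nat.add_assoc, Finset.sum_range_succ, ih, Finset.sum_range_succ, add_assoc]

lemma integral_legendre_eq_sum (n : ℕ) (β : ℝ) (hβ : -1 < β) :
    ∫ t in (0:ℝ)..1, (legendre (2*n)).eval t * t^β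
      = (1/(2^(2*n) * ((2*n).factorial:ℝ))) *
        ∑ j ∈ Finset.range (n+1),
          ((-1:ℝ)^(n+j) * ((2*n).choose (n+j)) * (((2*(n+j)).descFactorial (2*n) : ℕ) : ℝ)) / (β + 2*j + 1) := by
  set c : ℝ := 1/(2^(2*n) * ((2*n).factorial:ℝ)) with hc
  set a : ℕ → ℝ := fun k => ((-1:ℝ)^(k+2*n) * ((2*n).choose k) * (((2*k).descFactorial (2*n) : ℕ) : ℝ)) with ha
  have hint : ∀ k : ℕ, IntervalIntegrable
      (fun t : ℝ => (c * a k) * (t^(2*k-2*n) * t^β)) MeasureTheory.volume 0 1 :=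
    fun k => (((intervalIntegral.intervalIntegrable_rpow' hβ).continuousOn_mul
      (continuous_pow _).continuousOn)).const_mul _
  have h1 : ∫ t in (0:ℝ)..1, (legendre (2*n)).eval t * t^β
      = ∑ k ∈ Finset.range (2*n+1), (c * a k) * (1/(β + ((2*k-2*n : ℕ):ℝ) + 1)) := by
    have heq : Set.EqOn (fun t : ℝ => (legendre (2*n)).eval t * t^β)
        (fun t : ℝ => ∑ k ∈ Finset.range (2*n+1), (c * a k) * (t^(2*k-2*n) * t^β))
        (Set.uIcc 0 1) := by
      intro t _
      simp only [legendre_eval, Finset.sum_mul, Finset.mul_sum, hc, ha]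
      exact Finset.sum_congr rfl fun k _ => by ring
    rw [intervalIntegral.integral_congr heq,
      intervalIntegral.integral_finset_sum (fun k _ => hint k)]
    refine Finset.sum_congr rfl fun k _ => ?_
    rw [intervalIntegral.integral_const_mul, int_pow_rpow _ _ hβ]
  rw [h1, show 2*n+1 = n + (n+1) by omega, sum_range_split]
  have hz : ∀ i ∈ Finset.range n, (c * a i) * (1/(β + ((2*i-2*n : ℕ):ℝ) + 1)) = 0 := by
    intro i hi
    have : (2*i).descFactorial (2*n) = 0 :=
      Nat.descFactorial_eq_zero_iff_lt.mpr (by simp at hi; omega)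
    simp [ha, this]
  rw [Finset.sum_eq_zero hz, zero_add, Finset.mul_sum]
  refine Finset.sum_congr rfl fun j _ => ?_
  have he : 2*(n+j) - 2*n = 2*j := by omega
  have hs : (-1:ℝ)^(n+j+2*n) = (-1:ℝ)^(n+j) := by
    rw [pow_add]
    simp [pow_mul]
  rw [ha]
  simp only [he, hs]
  push_cast
  ring

lemma factorial_odd_prod (j : ℕ) : ∀ n : ℕ,
    (2:ℝ)^n * ((n+j).factorial : ℝ) * ((2*j).factorial : ℝ) *
      ∏ i ∈ Finset.range n, (2*(j+(i:ℝ))+1)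
    = ((2*(n+j)).factorial : ℝ) * (j.factorial : ℝ) := by
  intro n
  induction n with
  | zero => simp; ring
  | succ n ih =>
    rw [Finset.prod_range_succ]
    have h1 : ((n+1+j).factorial : ℝ) = ((n:ℝ)+j+1) * ((n+j).factorial : ℝ) := by
      rw [show n+1+j = (n+j)+1 by omega, Nat.factorial_succ]
      push_cast; ring
    have h2 : ((2*(n+1+j)).factorial : ℝ)
        = (2*((n:ℝ)+j)+2) * ((2*((n:ℝ)+j)+1) * ((2*(n+j)).factorial : ℝ)) := by
      rw [show 2*(n+1+j) = (2*(n+j)+1)+1 by omega, Nat.factorial_succ, Nat.factorial_succ]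
      push_cast; ring
    rw [h1, h2, pow_succ]
    push_cast
    linear_combination (2*((n:ℝ)+j)+1) * 2 * ((n:ℝ)+j+1) * ih

lemma prod_erase_eval (n j : ℕ) (hj : j ≤ n) :
    ∏ k ∈ (Finset.range (n+1)).erase j, ((2*(k:ℝ)) - 2*j)
      = (-1)^j * 2^n * (j.factorial : ℝ) * ((n-j).factorial : ℝ) := by
  have hsplit : (Finset.range (n+1)).erase j = Finset.range j ∪ Finset.Ico (j+1) (n+1) := by
    ext k
    simp only [Finset.mem_erase, Finset.mem_range, Finset.mem_union, Finset.mem_Ico]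
    omega
  have hdisj : Disjoint (Finset.range j) (Finset.Ico (j+1) (n+1)) := by
    rw [Finset.disjoint_left]
    intro k hk hk'
    simp only [Finset.mem_range] at hk
    simp only [Finset.mem_Ico] at hk'
    omega
  rw [hsplit, Finset.prod_union hdisj]
  have h1 : ∏ k ∈ Finset.range j, ((2*(k:ℝ)) - 2*j) = (-1)^j * 2^j * (j.factorial : ℝ) := by
    have : ∀ k ∈ Finset.range j, ((2*(k:ℝ)) - 2*j) = (-2) * ((j - k : ℕ) : ℝ) := by
      intro k hk
      simp only [Finset.mem_range] at hk
      rw [Nat.cast_sub hk.le]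
      ring
    rw [Finset.prod_congr rfl this, Finset.prod_mul_distrib, Finset.prod_const,
      Finset.card_range]
    have : ∏ k ∈ Finset.range j, ((j - k : ℕ) : ℝ) = (j.factorial : ℝ) := by
      rw [← Nat.cast_prod]
      congr 1
      calc ∏ k ∈ Finset.range j, (j - k) = ∏ k ∈ Finset.range j, (j - 1 - k + 1) := by
            refine Finset.prod_congr rfl fun k hk => ?_
            simp only [Finset.mem_range] at hk
            omega
        _ = ∏ k ∈ Finset.range j, (k + 1) := Finset.prod_range_reflect (fun k => k + 1) j
        _ = j.factorial := Finset.prod_range_add_one_eq_factorial j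
    rw [this, show ((-2:ℝ))^j = (-1)^j * 2^j by rw [← neg_one_mul, mul_pow]]
  have h2 : ∏ k ∈ Finset.Ico (j+1) (n+1), ((2*(k:ℝ)) - 2*j) = 2^(n-j) * ((n-j).factorial : ℝ) := by
    rw [Finset.prod_Ico_eq_prod_range]
    have he : n + 1 - (j+1) = n - j := by omega
    rw [he]
    have : ∀ k ∈ Finset.range (n-j), (2*(((j+1+k : ℕ)):ℝ) - 2*j) = 2 * ((k:ℝ) + 1) := by
      intro k _
      push_cast
      ring
    rw [Finset.prod_congr rfl this, Finset.prod_mul_distrib, Finset.prod_const,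
      Finset.card_range]
    congr 1
    rw [← Finset.prod_range_add_one_eq_factorial (n-j), Nat.cast_prod]
    push_cast
    ring
  rw [h1, h2]
  have : (2:ℝ)^j * 2^(n-j) = 2^n := by
    rw [← pow_add]
    congr 1
    omega
  linear_combination ((-1:ℝ))^j * ((j.factorial:ℝ) * ((n-j).factorial:ℝ)) * this

noncomputable def cc (n j : ℕ) : ℝ :=
  (-1:ℝ)^(n+j) * ((2*n).choose (n+j) : ℝ) * (((2*(n+j)).descFactorial (2*n) : ℕ) : ℝ)

lemma node_eq (n j : ℕ) (hj : j ≤ n) :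
    cc n j * ∏ k ∈ (Finset.range (n+1)).erase j, (-(2*(j:ℝ)+1) + (2*(k:ℝ)+1))
    = ((4:ℝ)^n * ((2*n).factorial : ℝ)) * ∏ i ∈ Finset.range n, (-(2*(j:ℝ)+1) - 2*(i:ℝ)) := by
  have hp1 : ∏ k ∈ (Finset.range (n+1)).erase j, (-(2*(j:ℝ)+1) + (2*(k:ℝ)+1))
      = ∏ k ∈ (Finset.range (n+1)).erase j, ((2*(k:ℝ)) - 2*j) :=
    Finset.prod_congr rfl fun k _ => by ring
  have hp2 : ∏ i ∈ Finset.range n, (-(2*(j:ℝ)+1) - 2*(i:ℝ))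
      = (-1:ℝ)^n * ∏ i ∈ Finset.range n, (2*((j:ℝ)+(i:ℝ))+1) := by
    rw [show ((-1:ℝ))^n = ∏ i ∈ Finset.range n, (-1:ℝ) by
      rw [Finset.prod_const, Finset.card_range], ← Finset.prod_mul_distrib]
    exact Finset.prod_congr rfl fun i _ => by ring
  rw [hp1, hp2, prod_erase_eval n j hj]
  have hodd := factorial_odd_prod j n
  have hA : (((2*n).choose (n+j) : ℕ) : ℝ) * ((n+j).factorial : ℝ) * ((n-j).factorial : ℝ)
      = ((2*n).factorial : ℝ) := by
    have h := Nat.choose_mul_factorial_mul_factorial (show n+j ≤ 2*n by omega)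
    have h2 : 2*n - (n+j) = n - j := by omega
    rw [h2] at h
    exact_mod_cast h
  have hB : (((2*(n+j)).descFactorial (2*n) : ℕ) : ℝ) * ((2*j).factorial : ℝ)
      = ((2*(n+j)).factorial : ℝ) := by
    have h := Nat.factorial_mul_descFactorial (show 2*n ≤ 2*(n+j) by omega)
    have h2 : 2*(n+j) - 2*n = 2*j := by omega
    rw [h2] at h
    rw [mul_comm] at h
    exact_mod_cast h
  have hsign : ((-1:ℝ))^(n+j) * (-1)^j = (-1)^n := by
    rw [← pow_add, show n+j+j = n+2*j by omega, pow_add, pow_mul]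
    norm_num
  have h4 : (2:ℝ)^n * 2^n = 4^n := by
    rw [← mul_pow]; norm_num
  -- clear the positive factor 2^n * (n+j)! * (2j)!
  have hpos : ((2:ℝ)^n * ((n+j).factorial : ℝ) * ((2*j).factorial : ℝ)) ≠ 0 := by
    positivity
  apply mul_right_cancel₀ hpos
  calc cc n j * ((-1:ℝ)^j * 2^n * (j.factorial : ℝ) * ((n-j).factorial : ℝ)) *
        ((2:ℝ)^n * ((n+j).factorial : ℝ) * ((2*j).factorial : ℝ))
      = ((-1:ℝ)^(n+j) * (-1)^j) * (((2:ℝ)^n * 2^n) *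
          ((((2*n).choose (n+j) : ℕ) : ℝ) * ((n+j).factorial : ℝ) * ((n-j).factorial : ℝ)) *
          ((((2*(n+j)).descFactorial (2*n) : ℕ) : ℝ) * ((2*j).factorial : ℝ)) *
          (j.factorial : ℝ)) := by rw [cc]; ring
    _ = (-1:ℝ)^n * ((4:ℝ)^n * ((2*n).factorial : ℝ) * ((2*(n+j)).factorial : ℝ) *
          (j.factorial : ℝ)) := by rw [hsign, h4, hA, hB]
    _ = ((4:ℝ)^n * ((2*n).factorial : ℝ)) *
          ((-1:ℝ)^n * ∏ i ∈ Finset.range n, (2*((j:ℝ)+(i:ℝ))+1)) *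
          ((2:ℝ)^n * ((n+j).factorial : ℝ) * ((2*j).factorial : ℝ)) := by
        linear_combination (-((4:ℝ)^n * ((2*n).factorial : ℝ) * (-1:ℝ)^n)) * hodd

lemma poly_identity (n : ℕ) :
    ∑ j ∈ Finset.range (n+1), Polynomial.C (cc n j) *
        ∏ k ∈ (Finset.range (n+1)).erase j, (Polynomial.X + Polynomial.C (2*(k:ℝ)+1))
    = Polynomial.C ((4:ℝ)^n * ((2*n).factorial : ℝ)) *
        ∏ i ∈ Finset.range n, (Polynomial.X - Polynomial.C (2*(i:ℝ))) := by
  apply Polynomial.eq_of_degrees_lt_of_eval_index_eq (v := fun j : ℕ => -(2*(j:ℝ)+1))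
      (Finset.range (n+1))
  · intro a _ b _ hab
    have : (a:ℝ) = b := by dsimp at hab; linarith
    exact_mod_cast this
  · rw [Finset.card_range]
    refine lt_of_le_of_lt (Polynomial.degree_sum_le _ _) ?_
    rw [Finset.sup_lt_iff (by exact_mod_cast WithBot.bot_lt_coe (n+1))]
    intro j hj
    refine lt_of_le_of_lt (Polynomial.degree_mul_le _ _) ?_
    have h1 : (Polynomial.C (cc n j)).degree ≤ 0 := Polynomial.degree_C_le
    have h2 : (∏ k ∈ (Finset.range (n+1)).erase j, (Polynomial.X + Polynomial.C (2*(k:ℝ)+1))).degree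
        ≤ (n : WithBot ℕ) := by
      refine le_trans (Polynomial.degree_prod_le _ _) ?_
      have : ∀ k ∈ (Finset.range (n+1)).erase j,
          (Polynomial.X + Polynomial.C (2*(k:ℝ)+1)).degree = 1 := fun k _ =>
        Polynomial.degree_X_add_C _
      rw [Finset.sum_congr rfl this, Finset.sum_const,
        Finset.card_erase_of_mem (by simpa using Finset.mem_range.mpr (Finset.mem_range.mp hj)),
        Finset.card_range]
      simp
    calc (Polynomial.C (cc n j)).degree +
          (∏ k ∈ (Finset.range (n+1)).erase j, (Polynomial.X + Polynomial.C (2*(k:ℝ)+1))).degree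
        ≤ 0 + (n : WithBot ℕ) := add_le_add h1 h2
      _ = (n : WithBot ℕ) := by rw [zero_add]
      _ < ((n+1 : ℕ) : WithBot ℕ) := by exact_mod_cast lt_add_one n
  · rw [Finset.card_range]
    refine lt_of_le_of_lt (Polynomial.degree_mul_le _ _) ?_
    have h2 : (∏ i ∈ Finset.range n, (Polynomial.X - Polynomial.C (2*(i:ℝ)))).degree
        ≤ (n : WithBot ℕ) := by
      refine le_trans (Polynomial.degree_prod_le _ _) ?_
      have : ∀ i ∈ Finset.range n, (Polynomial.X - Polynomial.C (2*(i:ℝ))).degree = 1 :=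
        fun i _ => Polynomial.degree_X_sub_C _
      rw [Finset.sum_congr rfl this, Finset.sum_const, Finset.card_range]
      simp
    calc (Polynomial.C ((4:ℝ)^n * ((2*n).factorial : ℝ))).degree +
          (∏ i ∈ Finset.range n, (Polynomial.X - Polynomial.C (2*(i:ℝ)))).degree
        ≤ 0 + (n : WithBot ℕ) := add_le_add Polynomial.degree_C_le h2
      _ = (n : WithBot ℕ) := by rw [zero_add]
      _ < ((n+1 : ℕ) : WithBot ℕ) := by exact_mod_cast lt_add_one n
  · intro j hj
    have hj' : j ≤ n := by simpa [Nat.lt_succ_iff] using hj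
    rw [Polynomial.eval_finset_sum]
    have hz : ∀ j' ∈ Finset.range (n+1), j' ≠ j →
        Polynomial.eval (-(2*(j:ℝ)+1)) (Polynomial.C (cc n j') *
          ∏ k ∈ (Finset.range (n+1)).erase j', (Polynomial.X + Polynomial.C (2*(k:ℝ)+1))) = 0 := by
      intro j' _ hne
      rw [Polynomial.eval_mul, Polynomial.eval_prod]
      have hjmem : j ∈ (Finset.range (n+1)).erase j' :=
        Finset.mem_erase.mpr ⟨(Ne.symm hne), hj⟩
      rw [Finset.prod_eq_zero hjmem (by simp), mul_zero]
    rw [Finset.sum_eq_single j hz (fun h => absurd hj h)]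
    have := node_eq n j hj'
    simp only [Polynomial.eval_mul, Polynomial.eval_prod, Polynomial.eval_add,
      Polynomial.eval_sub, Polynomial.eval_X, Polynomial.eval_C]
    convert this using 2 <;> ring_nf

lemma sum_eq_prod_div (n : ℕ) (β : ℝ) (hβ : -1 < β) :
    ∑ j ∈ Finset.range (n+1), cc n j / (β + 2*j + 1)
      = ((4:ℝ)^n * ((2*n).factorial : ℝ)) * (∏ i ∈ Finset.range n, (β - 2*i)) /
          ∏ k ∈ Finset.range (n+1), (β + 2*k + 1) := by
  have hne : ∀ k : ℕ, β + 2*(k:ℝ) + 1 ≠ 0 := by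
    intro k
    have : (0:ℝ) ≤ 2*(k:ℝ) := by positivity
    linarith
  have hprodne : (∏ k ∈ Finset.range (n+1), (β + 2*(k:ℝ) + 1)) ≠ 0 :=
    Finset.prod_ne_zero_iff.mpr fun k _ => hne k
  have hev := congrArg (Polynomial.eval β) (poly_identity n)
  simp only [Polynomial.eval_finset_sum, Polynomial.eval_mul, Polynomial.eval_prod,
    Polynomial.eval_add, Polynomial.eval_sub, Polynomial.eval_X, Polynomial.eval_C] at hev
  rw [eq_div_iff hprodne, Finset.sum_mul]
  rw [← hev]
  refine Finset.sum_congr rfl fun j hj => ?_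
  rw [div_mul_eq_mul_div, ← Finset.mul_prod_erase _ _ hj]
  rw [mul_comm (β + 2*(j:ℝ) + 1) _, ← mul_assoc, mul_div_assoc, div_self (hne j), mul_one]
  exact congrArg _ (Finset.prod_congr rfl fun k _ => by ring)

lemma Gamma_add_nat (x : ℝ) (m : ℕ) (h : ∀ k < m, x + k ≠ 0) :
    Real.Gamma (x + m) = Real.Gamma x * ∏ k ∈ Finset.range m, (x + k) := by
  induction m with
  | zero => simp
  | succ m ih =>
    have hx : x + ((m:ℕ)+1 : ℕ) = (x + m) + 1 := by push_cast; ring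
    rw [hx, Real.Gamma_add_one (h m (lt_add_one m)),
      ih (fun k hk => h k (hk.trans (lt_add_one m))), Finset.prod_range_succ]
    ring

lemma dup_formula (β : ℝ) :
    Real.sqrt π * (2:ℝ)^(-β) * Real.Gamma (1+β)
      = Real.Gamma ((β+1)/2) * Real.Gamma (β/2+1) := by
  have h := Real.Gamma_mul_Gamma_add_half ((β+1)/2)
  rw [show (β+1)/2 + 1/2 = β/2 + 1 by ring, show 2 * ((β+1)/2) = 1 + β by ring,
    show 1 - (1 + β) = -β by ring] at h
  rw [h]
  ring

lemma gamma_side (n : ℕ) (β : ℝ) (hβ : -1 < β) :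
    Real.sqrt π * (2:ℝ)^(-β) * Real.Gamma (1+β) /
      (Real.Gamma (1 - n + β/2) * Real.Gamma (β/2 + 3/2 + n))
    = 2 * ((∏ i ∈ Finset.range n, (β - 2*i)) / ∏ k ∈ Finset.range (n+1), (β + 2*k + 1)) := by
  have hne : ∀ k : ℕ, β + 2*(k:ℝ) + 1 ≠ 0 := by
    intro k
    have : (0:ℝ) ≤ 2*(k:ℝ) := by positivity
    linarith
  have hprodne : (∏ k ∈ Finset.range (n+1), (β + 2*(k:ℝ) + 1)) ≠ 0 :=
    Finset.prod_ne_zero_iff.mpr fun k _ => hne k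
  by_cases hcase : ∃ i, i < n ∧ β = 2*(i:ℝ)
  · obtain ⟨i, hi, hbi⟩ := hcase
    have h0 : (∏ i ∈ Finset.range n, (β - 2*(i:ℝ))) = 0 :=
      Finset.prod_eq_zero (Finset.mem_range.mpr hi) (by rw [hbi]; ring)
    have hcast : ((n-1-i : ℕ):ℝ) = (n:ℝ)-1-i := by
      rw [show n-1-i = n-(1+i) by omega, Nat.cast_sub (by omega : 1+i ≤ n)]
      push_cast
      ring
    have hg : (1:ℝ) - n + β/2 = -((n-1-i : ℕ):ℝ) := by
      rw [hbi, hcast]; ring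
    rw [h0, hg, Real.Gamma_neg_nat_eq_zero, zero_mul, div_zero, zero_div, mul_zero]
  · push_neg at hcase
    have hA : (0:ℝ) < (β+1)/2 := by linarith
    have hAne : Real.Gamma ((β+1)/2) ≠ 0 := (Real.Gamma_pos_of_pos hA).ne'
    have hBne : Real.Gamma (1 - n + β/2) ≠ 0 := by
      apply Real.Gamma_ne_zero
      intro m heq
      have hb : β = 2*((n:ℝ) - 1 - m) := by linarith
      rcases lt_or_ge m n with hmn | hmn
      · refine hcase (n-1-m) (by omega) ?_
        rw [hb]
        congr 1
        rw [show n-1-m = n-(1+m) by omega, Nat.cast_sub (by omega : 1+m ≤ n)]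
        push_cast
        ring
      · have : (n:ℝ) ≤ m := by exact_mod_cast hmn
        have : β ≤ -2 := by rw [hb]; linarith
        linarith
    have hga : Real.Gamma (β/2 + 3/2 + n)
        = Real.Gamma ((β+1)/2) * ∏ k ∈ Finset.range (n+1), ((β+1)/2 + k) := by
      have h := Gamma_add_nat ((β+1)/2) (n+1) (fun k _ => by positivity)
      rw [show (β+1)/2 + ((n+1 : ℕ):ℝ) = β/2 + 3/2 + n by push_cast; ring] at h
      exact h
    have hgb : Real.Gamma (β/2 + 1)
        = Real.Gamma (1 - n + β/2) * ∏ k ∈ Finset.range n, (1 - n + β/2 + k) := by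
      have h := Gamma_add_nat (1 - n + β/2) n ?_
      · rw [show (1 - (n:ℝ) + β/2) + (n:ℝ) = β/2 + 1 by ring] at h
        exact h
      · intro k hk heq
        refine hcase (n-1-k) (by omega) ?_
        have hc : ((n-1-k : ℕ):ℝ) = (n:ℝ)-1-k := by
          rw [show n-1-k = n-(1+k) by omega, Nat.cast_sub (by omega : 1+k ≤ n)]
          push_cast
          ring
        rw [hc]
        linarith
    have hreflect : ∏ k ∈ Finset.range n, (1 - (n:ℝ) + β/2 + k)
        = ∏ i ∈ Finset.range n, (β/2 - i) := by
      rw [← Finset.prod_range_reflect (fun i => β/2 - (i:ℝ)) n]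
      refine Finset.prod_congr rfl fun k hk => ?_
      simp only [Finset.mem_range] at hk
      have hc : ((n-1-k : ℕ):ℝ) = (n:ℝ)-1-k := by
        rw [show n-1-k = n-(1+k) by omega, Nat.cast_sub (by omega : 1+k ≤ n)]
        push_cast
        ring
      simp only [hc]
      ring
    have hP1 : ∏ i ∈ Finset.range n, (β - 2*(i:ℝ))
        = 2^n * ∏ i ∈ Finset.range n, (β/2 - i) := by
      rw [show ((2:ℝ))^n = ∏ i ∈ Finset.range n, (2:ℝ) by
        rw [Finset.prod_const, Finset.card_range], ← Finset.prod_mul_distrib]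
      exact Finset.prod_congr rfl fun i _ => by ring
    have hP2 : ∏ k ∈ Finset.range (n+1), (β + 2*(k:ℝ) + 1)
        = 2^(n+1) * ∏ k ∈ Finset.range (n+1), ((β+1)/2 + k) := by
      rw [show ((2:ℝ))^(n+1) = ∏ k ∈ Finset.range (n+1), (2:ℝ) by
        rw [Finset.prod_const, Finset.card_range], ← Finset.prod_mul_distrib]
      exact Finset.prod_congr rfl fun k _ => by ring
    have hP2ne : (∏ k ∈ Finset.range (n+1), ((β+1)/2 + (k:ℝ))) ≠ 0 := by
      refine Finset.prod_ne_zero_iff.mpr fun k _ => ?_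
      positivity
    rw [dup_formula, hga, hgb, hreflect, hP1, hP2, mul_div_assoc']
    rw [div_eq_div_iff
      (mul_ne_zero hBne (mul_ne_zero hAne hP2ne))
      (mul_ne_zero (by positivity) hP2ne)]
    ring

/-- `2 ∫₀¹ P_{2n}(t) t^β dt = √π 2^{-β} Γ(1+β) / (Γ(1-n+β/2) Γ(β/2+3/2+n))` for `β > -1`. -/
theorem integral_legendre_rpow (n : ℕ) (β : ℝ) (hβ : -1 < β) :
    2 * ∫ t in (0 : ℝ)..1, (legendre (2 * n)).eval t * t ^ β
      = Real.sqrt π * (2 : ℝ) ^ (-β) * Real.Gamma (1 + β) /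
        (Real.Gamma (1 - n + β / 2) * Real.Gamma (β / 2 + 3 / 2 + n)) := by
  have hsum := sum_eq_prod_div n β hβ
  simp only [cc] at hsum
  rw [integral_legendre_eq_sum n β hβ, hsum, gamma_side n β hβ]
  have h4 : (2:ℝ)^(2*n) = 4^n := by rw [pow_mul]; norm_num
  rw [h4, mul_div_assoc, one_div, inv_mul_cancel_left₀
    (by positivity : ((4:ℝ)^n * ((2*n).factorial:ℝ)) ≠ 0)]
end

section
/- If f : [-1,1] → ℝ is continuously differentiable, then its Legendre coefficients c_n = ((2n+1)/2) ∫_{-1}^1 f(t) P_n(t) dt satisfy |c_n| ≤ C / n^{1/2} for some constant C depending only on f and all n ≥ 1. -/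
open Polynomial

namespace LegAux

noncomputable def u (m : ℕ) : ℝ[X] := ((X:ℝ[X])^2 - 1)^m

lemma C2 : (C 2 : ℝ[X]) = 2 := map_ofNat C 2

lemma iter_add (k : ℕ) (p q : ℝ[X]) :
    derivative^[k] (p + q) = derivative^[k] p + derivative^[k] q := by
  induction k generalizing p q with
  | zero => rfl
  | succ k ih => simp [Function.iterate_succ_apply, ih]

lemma iter_cast_mul (k m : ℕ) (p : ℝ[X]) :
    derivative^[k] ((m:ℝ[X]) * p) = (m:ℝ[X]) * derivative^[k] p :=
  iterate_derivative_natCast_mul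

lemma deriv_u (m : ℕ) : derivative (u (m+1)) = ((m:ℝ[X])+1) * 2 * (X * u m) := by
  simp [u, derivative_pow, C2]
  push_cast
  ring

lemma iter_deriv_X_mul (k : ℕ) (p : ℝ[X]) :
    derivative^[k+1] (X * p) = X * derivative^[k+1] p + ((k:ℝ[X])+1) * derivative^[k] p := by
  induction k generalizing p with
  | zero => simp [derivative_mul]; ring
  | succ k ih =>
    calc derivative^[k+1+1] (X * p) = derivative^[k+1] (derivative (X * p)) :=
          Function.iterate_succ_apply _ _ _
    _ = derivative^[k+1] (p + X * derivative p) := by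
        rw [derivative_mul, derivative_X, one_mul]
    _ = derivative^[k+1] p + derivative^[k+1] (X * derivative p) := iter_add _ _ _
    _ = derivative^[k+1] p + (X * derivative^[k+1] (derivative p)
          + ((k:ℝ[X])+1) * derivative^[k] (derivative p)) := by rw [ih]
    _ = _ := by
        rw [← Function.iterate_succ_apply, ← Function.iterate_succ_apply]
        push_cast
        ring

lemma iter_deriv_sq_mul (k : ℕ) (p : ℝ[X]) :
    derivative^[k+2] ((X^2 - 1) * p)
      = (X^2-1) * derivative^[k+2] p + 2*((k:ℝ[X])+2) * (X * derivative^[k+1] p)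
        + ((k:ℝ[X])+2)*((k:ℝ[X])+1) * derivative^[k] p := by
  induction k generalizing p with
  | zero =>
    show derivative (derivative ((X ^ 2 - 1) * p)) = _
    simp [derivative_mul, derivative_pow, C2]
    ring
  | succ k ih =>
    calc derivative^[k+1+2] ((X^2-1) * p)
        = derivative^[k+2] (derivative ((X^2-1) * p)) := Function.iterate_succ_apply _ _ _
    _ = derivative^[k+2] ((X^2-1) * derivative p + 2 * (X * p)) := by
        rw [derivative_mul]; rw [show derivative ((X:ℝ[X])^2 - 1) = 2 * X by
          simp [derivative_pow, C2]]; ring_nf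
    _ = derivative^[k+2] ((X^2-1) * derivative p) + derivative^[k+2] (2 * (X * p)) :=
        iter_add _ _ _
    _ = ((X^2-1) * derivative^[k+2] (derivative p)
          + 2*((k:ℝ[X])+2) * (X * derivative^[k+1] (derivative p))
          + ((k:ℝ[X])+2)*((k:ℝ[X])+1) * derivative^[k] (derivative p))
        + 2 * (X * derivative^[k+2] p + ((k:ℝ[X])+1+1) * derivative^[k+1] p) := by
        rw [ih]
        congr 1
        rw [show ((2:ℝ[X])) = ((2:ℕ):ℝ[X]) by norm_num, iter_cast_mul,
          iter_deriv_X_mul (k+1) p]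
        push_cast; ring
    _ = _ := by
        rw [← Function.iterate_succ_apply, ← Function.iterate_succ_apply,
          ← Function.iterate_succ_apply]
        push_cast
        ring

lemma L3 (j : ℕ) :
    ((X:ℝ[X])^2 - 1) * derivative^[j+2] (u (j+1))
      = ((j:ℝ[X])+2)*((j:ℝ[X])+1) * derivative^[j] (u (j+1)) := by
  have e1 : derivative^[j+2] (u (j+2))
      = (X^2-1) * derivative^[j+2] (u (j+1)) + 2*((j:ℝ[X])+2) * (X * derivative^[j+1] (u (j+1)))
        + ((j:ℝ[X])+2)*((j:ℝ[X])+1) * derivative^[j] (u (j+1)) := by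
    rw [show u (j+2) = (X^2-1) * u (j+1) by rw [u, u, pow_succ]; ring]
    exact iter_deriv_sq_mul j (u (j+1))
  have e2 : derivative^[j+2] (u (j+2))
      = ((2*(j+2) : ℕ) : ℝ[X]) * (X * derivative^[j+1] (u (j+1))
          + ((j:ℝ[X])+1) * derivative^[j] (u (j+1))) := by
    calc derivative^[j+2] (u (j+2)) = derivative^[j+1] (derivative (u (j+2))) :=
          Function.iterate_succ_apply _ _ _
    _ = derivative^[j+1] (((2*(j+2) : ℕ) : ℝ[X]) * (X * u (j+1))) := by
        rw [deriv_u (j+1)]; congr 1; push_cast; ring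
    _ = ((2*(j+2) : ℕ) : ℝ[X]) * derivative^[j+1] (X * u (j+1)) := iter_cast_mul _ _ _
    _ = _ := by rw [iter_deriv_X_mul j (u (j+1))]
  linear_combination (norm := (push_cast; ring1)) e2 - e1

lemma preRec (j : ℕ) :
    derivative^[j+4] (u (j+3))
      = ((4*(j+2)*(j+3) : ℕ) : ℝ[X]) * derivative^[j+2] (u (j+1))
        + ((2*(j+3)*(2*(j+2)+1) : ℕ) : ℝ[X]) * derivative^[j+2] (u (j+2)) := by
  have h1 : derivative^[j+4] (u (j+3))
      = ((2*(j+3) : ℕ) : ℝ[X]) * (X * derivative^[j+3] (u (j+2))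
          + ((j:ℝ[X])+3) * derivative^[j+2] (u (j+2))) := by
    calc derivative^[j+4] (u (j+3)) = derivative^[j+3] (derivative (u (j+3))) :=
          Function.iterate_succ_apply _ _ _
    _ = derivative^[j+3] (((2*(j+3) : ℕ) : ℝ[X]) * (X * u (j+2))) := by
        rw [deriv_u (j+2)]; congr 1; push_cast; ring
    _ = ((2*(j+3) : ℕ) : ℝ[X]) * derivative^[j+3] (X * u (j+2)) := iter_cast_mul _ _ _
    _ = _ := by
        rw [show j+3 = (j+2)+1 from rfl, iter_deriv_X_mul (j+2) (u (j+2))]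
        push_cast
        ring
  have h2 : derivative^[j+3] (u (j+2))
      = ((2*(j+2) : ℕ) : ℝ[X]) * (X * derivative^[j+2] (u (j+1))
          + ((j:ℝ[X])+2) * derivative^[j+1] (u (j+1))) := by
    calc derivative^[j+3] (u (j+2)) = derivative^[j+2] (derivative (u (j+2))) :=
          Function.iterate_succ_apply _ _ _
    _ = derivative^[j+2] (((2*(j+2) : ℕ) : ℝ[X]) * (X * u (j+1))) := by
        rw [deriv_u (j+1)]; congr 1; push_cast; ring
    _ = ((2*(j+2) : ℕ) : ℝ[X]) * derivative^[j+2] (X * u (j+1)) := iter_cast_mul _ _ _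
    _ = _ := by
        rw [show j+2 = (j+1)+1 from rfl, iter_deriv_X_mul (j+1) (u (j+1))]
        push_cast
        ring
  have h3 : derivative^[j+2] (u (j+2))
      = ((2*(j+2) : ℕ) : ℝ[X]) * (X * derivative^[j+1] (u (j+1))
          + ((j:ℝ[X])+1) * derivative^[j] (u (j+1))) := by
    calc derivative^[j+2] (u (j+2)) = derivative^[j+1] (derivative (u (j+2))) :=
          Function.iterate_succ_apply _ _ _
    _ = derivative^[j+1] (((2*(j+2) : ℕ) : ℝ[X]) * (X * u (j+1))) := by
        rw [deriv_u (j+1)]; congr 1; push_cast; ring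
    _ = ((2*(j+2) : ℕ) : ℝ[X]) * derivative^[j+1] (X * u (j+1)) := iter_cast_mul _ _ _
    _ = _ := by rw [iter_deriv_X_mul j (u (j+1))]
  have h4 := L3 j
  rw [h1, h2, h3]
  linear_combination (norm := (push_cast; ring1))
    (4*((j:ℝ[X])+2)*((j:ℝ[X])+3)) * h4

lemma legendre_def (n : ℕ) :
    legendre n = C (1 / (2 ^ n * n.factorial : ℝ)) * derivative^[n] (u n) := rfl

lemma eval_iter_lt {m k : ℕ} (h : k < m) {x : ℝ} (hx : x^2 - 1 = 0) :
    (derivative^[k] (u m)).eval x = 0 := by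
  obtain ⟨r, hr⟩ := pow_sub_dvd_iterate_derivative_pow ((X:ℝ[X])^2 - 1) m k
  rw [u, hr, eval_mul, eval_pow]
  have : (m - k) ≠ 0 := by omega
  simp [hx, this]

lemma eval_one_iter (n : ℕ) : (derivative^[n] (u n)).eval 1 = 2^n * n.factorial := by
  induction n with
  | zero => simp [u]
  | succ n ih =>
    have key : derivative^[n+1] (u (n+1))
        = ((2*(n+1) : ℕ) : ℝ[X]) * derivative^[n] (X * u n) := by
      calc derivative^[n+1] (u (n+1)) = derivative^[n] (derivative (u (n+1))) :=
            Function.iterate_succ_apply _ _ _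
      _ = derivative^[n] (((2*(n+1) : ℕ) : ℝ[X]) * (X * u n)) := by
          rw [deriv_u n]; congr 1; push_cast; ring
      _ = _ := iter_cast_mul _ _ _
    cases n with
    | zero => simp [key, u]; norm_num
    | succ k =>
      rw [key, iter_deriv_X_mul k (u (k+1))]
      have h0 : (derivative^[k] (u (k+1))).eval 1 = 0 :=
        eval_iter_lt (by omega) (by norm_num)
      simp only [eval_mul, eval_add, eval_natCast, eval_X, eval_ofNat, h0, eval_one]
      rw [ih]
      push_cast [Nat.factorial_succ]
      ring
lemma eval_negone_iter (n : ℕ) :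
    (derivative^[n] (u n)).eval (-1) = (-2)^n * n.factorial := by
  induction n with
  | zero => simp [u]
  | succ n ih =>
    have key : derivative^[n+1] (u (n+1))
        = ((2*(n+1) : ℕ) : ℝ[X]) * derivative^[n] (X * u n) := by
      calc derivative^[n+1] (u (n+1)) = derivative^[n] (derivative (u (n+1))) :=
            Function.iterate_succ_apply _ _ _
      _ = derivative^[n] (((2*(n+1) : ℕ) : ℝ[X]) * (X * u n)) := by
          rw [deriv_u n]; congr 1; push_cast; ring
      _ = _ := iter_cast_mul _ _ _
    cases n with
    | zero => simp [key, u]; norm_num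
    | succ k =>
      rw [key, iter_deriv_X_mul k (u (k+1))]
      have h0 : (derivative^[k] (u (k+1))).eval (-1) = 0 :=
        eval_iter_lt (by omega) (by norm_num)
      simp only [eval_mul, eval_add, eval_natCast, eval_X, eval_ofNat, h0, eval_one]
      rw [ih]
      push_cast [Nat.factorial_succ]
      ring

lemma legendre_eval_one (n : ℕ) : (legendre n).eval 1 = 1 := by
  have h2 : (2:ℝ)^n ≠ 0 := by positivity
  have hf : ((n.factorial : ℝ)) ≠ 0 := Nat.cast_ne_zero.2 (Nat.factorial_ne_zero _)
  rw [legendre_def, eval_mul, eval_C, eval_one_iter]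
  field_simp

lemma legendre_eval_negone (n : ℕ) : (legendre n).eval (-1) = (-1)^n := by
  have h2 : (2:ℝ)^n ≠ 0 := by positivity
  have hf : ((n.factorial : ℝ)) ≠ 0 := Nat.cast_ne_zero.2 (Nat.factorial_ne_zero _)
  rw [legendre_def, eval_mul, eval_C, eval_negone_iter,
    show ((-2:ℝ))^n = (-1)^n * 2^n by rw [← neg_one_mul, mul_pow]]
  field_simp

lemma iter_two_mul (m : ℕ) :
    derivative^[2*m] (u m) = C (((2*m).factorial : ℝ)) := by
  have hdeg : (u m).natDegree = 2*m := by
    rw [u, natDegree_pow, show ((X:ℝ[X])^2 - 1) = X^2 - C 1 by simp, natDegree_X_pow_sub_C]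
    ring
  have h1 : (derivative^[2*m] (u m)).natDegree ≤ 0 := by
    have := natDegree_iterate_derivative (u m) (2*m)
    omega
  have h2 := coeff_iterate_derivative (u m) 0 (k := 2*m)
  rw [eq_C_of_natDegree_le_zero h1, h2]
  have hm : (u m).Monic := (monic_X_pow_sub_C (1:ℝ) (by norm_num)).pow m
  have : (u m).coeff (0 + 2*m) = 1 := by
    rw [zero_add, ← hdeg]
    exact hm.coeff_natDegree
  rw [this, zero_add, Nat.descFactorial_self]
  simp

lemma legendre_rec_one :
    derivative (legendre 2) = derivative (legendre 0) + C (2*((1:ℕ):ℝ)+1) * legendre 1 := by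
  have h0 : legendre 0 = C 1 := by rw [legendre_def]; simp [u]
  have h1 : legendre 1 = C (1/2 : ℝ) * derivative (u 1) := by
    rw [legendre_def]
    norm_num [Nat.factorial]
  have h2 : legendre 2 = C (1/8 : ℝ) * derivative (derivative (u 2)) := by
    rw [legendre_def]
    norm_num [Nat.factorial]
  have hu1 : derivative (u 1) = C 2 * X := by
    rw [u, pow_one]
    simp [derivative_X_pow]
    rw [C2]; norm_num
  have hu2 : derivative (derivative (u 2)) = C 12 * X^2 - C 4 := by
    rw [u, show (((X:ℝ[X])^2-1)^2) = X^4 - 2*X^2 + 1 by ring]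
    simp [derivative_X_pow]
    apply Polynomial.funext
    intro x
    simp
    ring
  rw [h0, h1, h2, derivative_C_mul, hu2, hu1]
  apply Polynomial.funext
  intro x
  simp [derivative_X_pow]
  ring

lemma legendre_rec_big (j : ℕ) :
    derivative (legendre (j+3))
      = derivative (legendre (j+1)) + C (2*((j+2:ℕ):ℝ)+1) * legendre (j+2) := by
  have f1 : (((j+1).factorial : ℝ)) ≠ 0 := Nat.cast_ne_zero.2 (Nat.factorial_ne_zero _)
  have e3 : ((j+3).factorial : ℝ) = ((j:ℝ)+3)*(((j:ℝ)+2)*((j+1).factorial : ℝ)) := by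
    rw [show j+3 = (j+2)+1 from rfl, Nat.factorial_succ, show j+2 = (j+1)+1 from rfl,
      Nat.factorial_succ]
    push_cast; ring
  have e2 : ((j+2).factorial : ℝ) = ((j:ℝ)+2)*((j+1).factorial : ℝ) := by
    rw [show j+2 = (j+1)+1 from rfl, Nat.factorial_succ]; push_cast; ring
  have hA : (1/(2^(j+3) * ((j+3).factorial) : ℝ)) * ((4*(j+2)*(j+3) : ℕ) : ℝ)
      = 1/(2^(j+1) * ((j+1).factorial)) := by
    rw [e3]; push_cast
    have h2 : (2:ℝ)^(j+1) ≠ 0 := by positivity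
    have h3 : ((j:ℝ)+3) ≠ 0 := by positivity
    have h4 : ((j:ℝ)+2) ≠ 0 := by positivity
    field_simp
    ring
  have hB : (1/(2^(j+3) * ((j+3).factorial) : ℝ)) * ((2*(j+3)*(2*(j+2)+1) : ℕ) : ℝ)
      = (2*((j+2:ℕ):ℝ)+1) * (1/(2^(j+2) * ((j+2).factorial))) := by
    rw [e3, e2]; push_cast
    have h2 : (2:ℝ)^(j+1) ≠ 0 := by positivity
    have h3 : ((j:ℝ)+3) ≠ 0 := by positivity
    have h4 : ((j:ℝ)+2) ≠ 0 := by positivity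
    field_simp
    ring
  have hd3 : derivative (legendre (j+3))
      = C (1/(2^(j+3) * ((j+3).factorial) : ℝ)) * derivative^[j+4] (u (j+3)) := by
    rw [legendre_def, derivative_C_mul]
    congr 1
    exact (Function.iterate_succ_apply' derivative (j+3) (u (j+3))).symm
  have hd1 : derivative (legendre (j+1))
      = C (1/(2^(j+1) * ((j+1).factorial) : ℝ)) * derivative^[j+2] (u (j+1)) := by
    rw [legendre_def, derivative_C_mul]
    congr 1
    exact (Function.iterate_succ_apply' derivative (j+1) (u (j+1))).symm
  rw [hd3, hd1, preRec j, legendre_def (j+2)]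
  rw [← C_eq_natCast, ← C_eq_natCast, mul_add, ← mul_assoc, ← C_mul, ← mul_assoc, ← C_mul,
    hA, hB, ← mul_assoc, ← C_mul]

lemma legendre_rec (n : ℕ) (hn : 1 ≤ n) :
    derivative (legendre (n+1)) = derivative (legendre (n-1)) + C (2*((n:ℕ):ℝ)+1) * legendre n := by
  match n, hn with
  | 1, _ => exact legendre_rec_one
  | (j+2), _ => exact legendre_rec_big j


open MeasureTheory intervalIntegral in
lemma poly_ii (p : ℝ[X]) : IntervalIntegrable (fun t => p.eval t) volume (-1 : ℝ) 1 :=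
  p.continuous_aeval.intervalIntegrable _ _

open MeasureTheory intervalIntegral in
lemma ibp_poly (p q : ℝ[X]) (hp1 : p.eval 1 = 0) (hpm : p.eval (-1) = 0) :
    ∫ t in (-1:ℝ)..1, (derivative p).eval t * q.eval t
      = - ∫ t in (-1:ℝ)..1, p.eval t * (derivative q).eval t := by
  have key := intervalIntegral.integral_deriv_mul_eq_sub (a := (-1:ℝ)) (b := 1)
    (u := fun t => p.eval t) (v := fun t => q.eval t)
    (u' := fun t => (derivative p).eval t) (v' := fun t => (derivative q).eval t)
    (fun x _ => p.hasDerivAt x) (fun x _ => q.hasDerivAt x)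
    (poly_ii _) (poly_ii _)
  have key2 : (∫ t in (-1:ℝ)..1, (derivative p * q).eval t)
      + ∫ t in (-1:ℝ)..1, (p * derivative q).eval t = 0 := by
    rw [← intervalIntegral.integral_add (poly_ii _) (poly_ii _)]
    simpa [eval_mul, hp1, hpm] using key
  have g1 : (∫ t in (-1:ℝ)..1, (derivative p).eval t * q.eval t)
      = ∫ t in (-1:ℝ)..1, (derivative p * q).eval t := by simp [eval_mul]
  have g2 : (∫ t in (-1:ℝ)..1, p.eval t * (derivative q).eval t)
      = ∫ t in (-1:ℝ)..1, (p * derivative q).eval t := by simp [eval_mul]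
  rw [g1, g2]; linarith


open MeasureTheory in
lemma ibp_chain (m : ℕ) : ∀ k, k ≤ m →
    (∫ t in (-1:ℝ)..1, (derivative^[m] (u m)).eval t * (derivative^[m] (u m)).eval t)
      = (-1 : ℝ)^k * ∫ t in (-1:ℝ)..1,
          (derivative^[m-k] (u m)).eval t * (derivative^[m+k] (u m)).eval t := by
  intro k
  induction k with
  | zero => simp
  | succ k ih =>
    intro hk1
    have hk' : k ≤ m := by omega
    rw [ih hk']
    have hs : m - k = (m - (k+1)) + 1 := by omega
    have h1 : derivative^[(m-(k+1))+1] (u m) = derivative (derivative^[m-(k+1)] (u m)) :=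
      Function.iterate_succ_apply' _ _ _
    have h2 : derivative^[m+(k+1)] (u m) = derivative (derivative^[m+k] (u m)) :=
      Function.iterate_succ_apply' _ _ _
    have step : (∫ t in (-1:ℝ)..1,
          (derivative^[m-k] (u m)).eval t * (derivative^[m+k] (u m)).eval t)
        = - ∫ t in (-1:ℝ)..1,
            (derivative^[m-(k+1)] (u m)).eval t * (derivative^[m+(k+1)] (u m)).eval t := by
      rw [hs, h1, h2]
      exact ibp_poly _ _ (eval_iter_lt (by omega) (by norm_num))
        (eval_iter_lt (by omega) (by norm_num))
    rw [step]
    ring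

open MeasureTheory in
lemma int_q_sq (m : ℕ) :
    (∫ t in (-1:ℝ)..1, (derivative^[m] (u m)).eval t * (derivative^[m] (u m)).eval t)
      = (-1 : ℝ)^m * ((2*m).factorial : ℝ) * ∫ t in (-1:ℝ)..1, (u m).eval t := by
  rw [ibp_chain m m le_rfl]
  have h0 : m - m = 0 := by omega
  have h2 : m + m = 2*m := by ring
  rw [h0, h2, iter_two_mul]
  simp only [Function.iterate_zero, id_eq, eval_C]
  rw [mul_assoc]
  congr 1
  rw [← intervalIntegral.integral_const_mul]
  congr 1
  funext t
  ring

open MeasureTheory in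
lemma I_rec (m : ℕ) :
    (2*(m:ℝ)+3) * (∫ t in (-1:ℝ)..1, (u (m+1)).eval t)
      = -(2*(m:ℝ)+2) * ∫ t in (-1:ℝ)..1, (u m).eval t := by
  have hder : derivative (X * u (m+1))
      = ((2*m+3 : ℕ) : ℝ[X]) * u (m+1) + ((2*m+2 : ℕ) : ℝ[X]) * u m := by
    rw [derivative_mul, derivative_X, deriv_u m, one_mul]
    rw [show u (m+1) = (X^2-1) * u m by rw [u, u, pow_succ]; ring]
    push_cast
    ring
  have ftc := intervalIntegral.integral_eq_sub_of_hasDerivAt (a := (-1:ℝ)) (b := 1)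
    (f := fun t => (X * u (m+1)).eval t) (f' := fun t => (derivative (X * u (m+1))).eval t)
    (fun x _ => (X * u (m+1)).hasDerivAt x) (poly_ii _)
  have hb : (X * u (m+1)).eval 1 = 0 ∧ (X * u (m+1)).eval (-1) = 0 := by
    constructor <;> simp [u]
  have ftc2 : (∫ t in (-1:ℝ)..1, (derivative (X * u (m+1))).eval t)
      = (X * u (m+1)).eval 1 - (X * u (m+1)).eval (-1) := ftc
  rw [hb.1, hb.2, sub_zero, hder] at ftc2
  have split : (∫ t in (-1:ℝ)..1, (((2*m+3 : ℕ) : ℝ[X]) * u (m+1)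
        + ((2*m+2 : ℕ) : ℝ[X]) * u m).eval t)
      = ((2*m+3 : ℕ) : ℝ) * (∫ t in (-1:ℝ)..1, (u (m+1)).eval t)
        + ((2*m+2 : ℕ) : ℝ) * ∫ t in (-1:ℝ)..1, (u m).eval t := by
    rw [← intervalIntegral.integral_const_mul, ← intervalIntegral.integral_const_mul,
      ← intervalIntegral.integral_add]
    · congr 1; funext t; simp
    · simpa using poly_ii (((2*m+3 : ℕ) : ℝ[X]) * u (m+1))
    · simpa using poly_ii (((2*m+2 : ℕ) : ℝ[X]) * u m)
  rw [split] at ftc2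
  push_cast at ftc2 ⊢
  linarith

open MeasureTheory in
lemma I_closed (m : ℕ) :
    (∫ t in (-1:ℝ)..1, (u m).eval t)
      = (-1:ℝ)^m * 2^(2*m+1) * ((m.factorial : ℝ))^2 / ((2*m+1).factorial : ℝ) := by
  induction m with
  | zero => norm_num [u, Nat.factorial]
  | succ m ih =>
    have hr := I_rec m
    rw [ih] at hr
    have h3 : (2*(m:ℝ)+3) ≠ 0 := by positivity
    have hfact : ((2*(m+1)+1).factorial : ℝ)
        = (2*(m:ℝ)+3) * ((2*(m:ℝ)+2) * ((2*m+1).factorial : ℝ)) := by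
      rw [show 2*(m+1)+1 = (2*m+2)+1 from by ring, Nat.factorial_succ,
        show 2*m+2 = (2*m+1)+1 from rfl, Nat.factorial_succ]
      push_cast
      ring
    have hfm : (((m+1).factorial : ℝ)) = ((m:ℝ)+1) * (m.factorial : ℝ) := by
      rw [Nat.factorial_succ]; push_cast; ring
    have hne1 : (((2*m+1).factorial : ℝ)) ≠ 0 := Nat.cast_ne_zero.2 (Nat.factorial_ne_zero _)
    have h2 : (2*(m:ℝ)+2) ≠ 0 := by positivity
    have hpow1 : ((-1:ℝ))^(m+1) = -((-1:ℝ))^m := by rw [pow_succ]; ring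
    have hpow2 : (2:ℝ)^(2*(m+1)+1) = 4 * 2^(2*m+1) := by
      rw [show 2*(m+1)+1 = (2*m+1)+2 by ring, pow_add]; norm_num; ring
    rw [hfact, hfm, hpow1, hpow2]
    field_simp at hr ⊢
    linear_combination 2 * hr


open MeasureTheory in
lemma legendre_norm_sq (m : ℕ) :
    (∫ t in (-1:ℝ)..1, ((legendre m).eval t)^2) = 2 / (2*(m:ℝ)+1) := by
  have h1 : ∀ t:ℝ, ((legendre m).eval t)^2
      = (1/(2^m * (m.factorial:ℝ)))^2
        * ((derivative^[m] (u m)).eval t * (derivative^[m] (u m)).eval t) := by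
    intro t; rw [legendre_def]; simp [eval_mul]; ring
  have step : (∫ t in (-1:ℝ)..1, ((legendre m).eval t)^2)
      = (1/(2^m * (m.factorial:ℝ)))^2 * ∫ t in (-1:ℝ)..1,
          (derivative^[m] (u m)).eval t * (derivative^[m] (u m)).eval t := by
    rw [← intervalIntegral.integral_const_mul]
    congr 1; funext t; exact h1 t
  rw [step, int_q_sq, I_closed]
  have hf2 : ((2*m+1).factorial : ℝ) = (2*(m:ℝ)+1) * ((2*m).factorial:ℝ) := by
    rw [Nat.factorial_succ]; push_cast; ring
  have e1 : ((-1:ℝ))^m * (-1:ℝ)^m = 1 := by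
    rw [← pow_add, ← two_mul, pow_mul]; norm_num
  have e2 : ((2:ℝ)^m)^2 = 2^(2*m) := by rw [← pow_mul, mul_comm]
  have e3 : (2:ℝ)^(2*m+1) = 2 * 2^(2*m) := by rw [pow_succ]; ring
  have n1 : ((m.factorial:ℝ)) ≠ 0 := Nat.cast_ne_zero.2 (Nat.factorial_ne_zero _)
  have n2 : (((2*m).factorial:ℝ)) ≠ 0 := Nat.cast_ne_zero.2 (Nat.factorial_ne_zero _)
  have n3 : ((2:ℝ)^(2*m)) ≠ 0 := by positivity
  have n4 : (2*(m:ℝ)+1) ≠ 0 := by positivity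
  rw [hf2, e3]
  field_simp
  linear_combination ((2:ℝ)^(2*m)) * e1 + (2*(2*(m:ℝ)+1) * ((2*m).factorial:ℝ)) * e2

open MeasureTheory in
lemma int_abs_legendre_le (m : ℕ) (r : ℝ) (hr : 0 < r) :
    (∫ t in (-1:ℝ)..1, |(legendre m).eval t|)
      ≤ (1/(2*r)) * (2/(2*(m:ℝ)+1)) + r := by
  have h2r : (0:ℝ) < 2*r := by linarith
  have pt : ∀ t:ℝ, |(legendre m).eval t| ≤ (1/(2*r)) * ((legendre m).eval t)^2 + r/2 := by
    intro t
    rw [show (1/(2*r)) * ((legendre m).eval t)^2 + r/2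
        = (((legendre m).eval t)^2 + r^2)/(2*r) by field_simp,
      le_div_iff₀ h2r]
    nlinarith [sq_nonneg (|(legendre m).eval t| - r), sq_abs ((legendre m).eval t),
      abs_nonneg ((legendre m).eval t)]
  have i1 : IntervalIntegrable (fun t => |(legendre m).eval t|) volume (-1:ℝ) 1 :=
    ((legendre m).continuous_aeval.abs).intervalIntegrable _ _
  have i2 : IntervalIntegrable
      (fun t => (1/(2*r)) * ((legendre m).eval t)^2 + r/2) volume (-1:ℝ) 1 :=
    ((continuous_const.mul ((legendre m).continuous_aeval.pow 2)).add continuous_const).intervalIntegrable _ _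
  have mono := intervalIntegral.integral_mono_on (by norm_num : (-1:ℝ) ≤ 1) i1 i2
    (fun t _ => pt t)
  have eq2 : (∫ t in (-1:ℝ)..1, ((1/(2*r)) * ((legendre m).eval t)^2 + r/2))
      = (1/(2*r)) * (2/(2*(m:ℝ)+1)) + r := by
    have i3 : IntervalIntegrable (fun t : ℝ => (1/(2*r)) * ((legendre m).eval t)^2)
        volume (-1:ℝ) 1 :=
      (continuous_const.mul ((legendre m).continuous_aeval.pow 2)).intervalIntegrable _ _
    rw [intervalIntegral.integral_add i3 (intervalIntegrable_const),
      intervalIntegral.integral_const_mul, legendre_norm_sq, intervalIntegral.integral_const]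
    norm_num
    ring
  calc (∫ t in (-1:ℝ)..1, |(legendre m).eval t|)
      ≤ ∫ t in (-1:ℝ)..1, ((1/(2*r)) * ((legendre m).eval t)^2 + r/2) := mono
    _ = _ := eq2


open MeasureTheory in
lemma int_abs_le (n m : ℕ) (hn : 1 ≤ n) (hm : (n:ℝ) ≤ 2*(m:ℝ)+1) :
    (∫ t in (-1:ℝ)..1, |(legendre m).eval t|) ≤ 2 / Real.sqrt n := by
  have hn0 : (0:ℝ) < n := by exact_mod_cast hn
  have hs : 0 < Real.sqrt n := Real.sqrt_pos.2 hn0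
  have hss : Real.sqrt n * Real.sqrt n = n := Real.mul_self_sqrt hn0.le
  have h := int_abs_legendre_le m (1/Real.sqrt n) (by positivity)
  refine h.trans ?_
  have h1 : (1/(2*(1/Real.sqrt n))) = Real.sqrt n/2 := by
    field_simp
  have h2 : 2/(2*(m:ℝ)+1) ≤ 2/(n:ℝ) := by
    apply div_le_div_of_nonneg_left (by norm_num) hn0 hm
  have h3 : (Real.sqrt n/2)*(2/(n:ℝ)) = 1/Real.sqrt n := by
    rw [div_mul_div_comm, eq_div_iff hs.ne']
    field_simp
    linarith [hss]
  calc (1/(2*(1/Real.sqrt n))) * (2/(2*(m:ℝ)+1)) + 1/Real.sqrt n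
      ≤ (Real.sqrt n/2) * (2/(n:ℝ)) + 1/Real.sqrt n := by
        rw [h1]
        have : (0:ℝ) ≤ Real.sqrt n/2 := by positivity
        nlinarith [h2]
    _ = 2/Real.sqrt n := by rw [h3]; ring

end LegAux

open MeasureTheory LegAux

/-- If `f` is C¹ on `[-1,1]`, then its Legendre coefficients satisfy `|cₙ| ≤ C / n^{1/2}`. -/
theorem legendre_coeff_decay_C1 (f : ℝ → ℝ)
    (hf : ContDiffOn ℝ 1 f (Set.Icc (-1 : ℝ) 1)) :
    ∃ C : ℝ, ∀ n : ℕ, 1 ≤ n →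
      |((2 * (n : ℝ) + 1) / 2) * ∫ t in (-1 : ℝ)..1, f t * (legendre n).eval t|
        ≤ C / Real.sqrt n := by
  set s : Set ℝ := Set.Icc (-1:ℝ) 1 with hs_def
  have huIcc : (Set.uIcc (-1:ℝ) 1) = s := Set.uIcc_of_le (by norm_num)
  have hsU : UniqueDiffOn ℝ s := uniqueDiffOn_Icc (by norm_num)
  set f' : ℝ → ℝ := fun x => derivWithin f s x with hf'_def
  have hfc : ContinuousOn f s := hf.continuousOn
  have hf'c : ContinuousOn f' s := hf.continuousOn_derivWithin hsU le_rfl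
  have h'at : ∀ x ∈ Set.Ioo (-1:ℝ) 1, HasDerivAt f (f' x) x := by
    intro x hx
    have hnx : s ∈ nhds x := Icc_mem_nhds hx.1 hx.2
    have hdx : DifferentiableAt ℝ f x :=
      ((hf.differentiableOn one_ne_zero) x (Set.Ioo_subset_Icc_self hx)).differentiableAt hnx
    have : f' x = deriv f x := derivWithin_of_mem_nhds hnx
    rw [this]
    exact hdx.hasDerivAt
  obtain ⟨M, hM⟩ := (isCompact_Icc : IsCompact s).exists_bound_of_continuousOn hf'c
  set M0 : ℝ := max M 0 with hM0_def
  have hM0 : ∀ x ∈ s, |f' x| ≤ M0 := fun x hx =>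
    (Real.norm_eq_abs (f' x) ▸ hM x hx).trans (le_max_left _ _)
  refine ⟨2 * M0, ?_⟩
  intro n hn
  have hn0 : (0:ℝ) < n := by exact_mod_cast hn
  have hsq : 0 < Real.sqrt n := Real.sqrt_pos.2 hn0
  set g : ℝ[X] := legendre (n+1) - legendre (n-1) with hg_def
  have hg1 : g.eval 1 = 0 := by
    simp [hg_def, legendre_eval_one]
  have hgm : g.eval (-1) = 0 := by
    have : (-1:ℝ)^(n+1) = (-1)^(n-1) := by
      rw [show n+1 = (n-1)+2 by omega, pow_add]
      norm_num
    simp [hg_def, legendre_eval_negone, this]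
  have hdg : derivative g = C (2*(n:ℝ)+1) * legendre n := by
    rw [hg_def, derivative_sub, legendre_rec n hn]
    push_cast
    ring
  -- integration by parts
  have hvcont : Continuous (fun t : ℝ => g.eval t) := g.continuous_aeval
  have hIBP := intervalIntegral.integral_deriv_mul_eq_sub_of_hasDerivAt (a := (-1:ℝ)) (b := 1)
    (u := f) (v := fun t => g.eval t) (u' := f') (v' := fun t => (derivative g).eval t)
    (by rw [huIcc]; exact hfc) hvcont.continuousOn
    (by
      intro x hx
      apply h'at
      simpa using hx)
    (by
      intro x hx
      exact g.hasDerivAt x)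
    (by
      apply ContinuousOn.intervalIntegrable
      rw [huIcc]; exact hf'c)
    (poly_ii _)
  have hIBP2 : (∫ x in (-1:ℝ)..1, (f' x * g.eval x + f x * (derivative g).eval x))
      = f 1 * g.eval 1 - f (-1) * g.eval (-1) := hIBP
  rw [hg1, hgm] at hIBP2
  have iA : IntervalIntegrable (fun x => f' x * g.eval x) volume (-1:ℝ) 1 := by
    apply ContinuousOn.intervalIntegrable
    rw [huIcc]
    exact hf'c.mul hvcont.continuousOn
  have iB : IntervalIntegrable (fun x => f x * (derivative g).eval x) volume (-1:ℝ) 1 := by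
    apply ContinuousOn.intervalIntegrable
    rw [huIcc]
    exact hfc.mul (derivative g).continuous_aeval.continuousOn
  rw [intervalIntegral.integral_add iA iB] at hIBP2
  have hB : (∫ x in (-1:ℝ)..1, f x * (derivative g).eval x)
      = (2*(n:ℝ)+1) * ∫ t in (-1:ℝ)..1, f t * (legendre n).eval t := by
    rw [← intervalIntegral.integral_const_mul]
    congr 1
    funext x
    rw [hdg]
    simp [eval_mul]
    ring
  rw [hB] at hIBP2
  -- hIBP : ∫ A + (2n+1) * ∫ f Pn = f 1 * 0 - f (-1) * 0
  have key : (2*(n:ℝ)+1) * (∫ t in (-1:ℝ)..1, f t * (legendre n).eval t)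
      = - ∫ x in (-1:ℝ)..1, f' x * g.eval x := by
    have h0 : f 1 * 0 - f (-1) * 0 = 0 := by ring
    linarith [hIBP2]
  -- bound
  have habsA : |∫ x in (-1:ℝ)..1, f' x * g.eval x|
      ≤ ∫ x in (-1:ℝ)..1, |f' x * g.eval x| :=
    intervalIntegral.abs_integral_le_integral_abs (by norm_num)
  have iabs1 : IntervalIntegrable (fun t : ℝ => |(legendre (n+1)).eval t|) volume (-1:ℝ) 1 :=
    ((legendre (n+1)).continuous_aeval.abs).intervalIntegrable _ _
  have iabs2 : IntervalIntegrable (fun t : ℝ => |(legendre (n-1)).eval t|) volume (-1:ℝ) 1 :=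
    ((legendre (n-1)).continuous_aeval.abs).intervalIntegrable _ _
  have iRHS : IntervalIntegrable
      (fun t : ℝ => M0 * (|(legendre (n+1)).eval t| + |(legendre (n-1)).eval t|))
      volume (-1:ℝ) 1 := by
    apply IntervalIntegrable.const_mul
    exact iabs1.add iabs2
  have hmono : (∫ x in (-1:ℝ)..1, |f' x * g.eval x|)
      ≤ ∫ t in (-1:ℝ)..1, M0 * (|(legendre (n+1)).eval t| + |(legendre (n-1)).eval t|) := by
    apply intervalIntegral.integral_mono_on (by norm_num)
      (iA.abs) iRHS
    intro t ht
    have hb1 : |f' t| ≤ M0 := hM0 t ht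
    have hb2 : |g.eval t| ≤ |(legendre (n+1)).eval t| + |(legendre (n-1)).eval t| := by
      rw [hg_def]
      simpa using abs_sub ((legendre (n+1)).eval t) ((legendre (n-1)).eval t)
    calc |f' t * g.eval t| = |f' t| * |g.eval t| := abs_mul _ _
      _ ≤ M0 * (|(legendre (n+1)).eval t| + |(legendre (n-1)).eval t|) := by
          apply mul_le_mul hb1 hb2 (abs_nonneg _)
          exact (abs_nonneg _).trans hb1
  have hsplit : (∫ t in (-1:ℝ)..1, M0 * (|(legendre (n+1)).eval t| + |(legendre (n-1)).eval t|))
      = M0 * ((∫ t in (-1:ℝ)..1, |(legendre (n+1)).eval t|)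
          + ∫ t in (-1:ℝ)..1, |(legendre (n-1)).eval t|) := by
    rw [intervalIntegral.integral_const_mul, intervalIntegral.integral_add iabs1 iabs2]
  have hA1 : (∫ t in (-1:ℝ)..1, |(legendre (n+1)).eval t|) ≤ 2 / Real.sqrt n := by
    apply int_abs_le n (n+1) hn
    push_cast
    linarith
  have hA2 : (∫ t in (-1:ℝ)..1, |(legendre (n-1)).eval t|) ≤ 2 / Real.sqrt n := by
    apply int_abs_le n (n-1) hn
    have : ((n-1:ℕ):ℝ) = (n:ℝ) - 1 := by
      have : (1:ℕ) ≤ n := hn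
      push_cast [this]
      ring
    rw [this]
    linarith
  have hM0nn : 0 ≤ M0 := le_max_right _ _
  have final : |∫ x in (-1:ℝ)..1, f' x * g.eval x| ≤ M0 * (4 / Real.sqrt n) := by
    calc |∫ x in (-1:ℝ)..1, f' x * g.eval x|
        ≤ ∫ x in (-1:ℝ)..1, |f' x * g.eval x| := habsA
      _ ≤ ∫ t in (-1:ℝ)..1, M0 * (|(legendre (n+1)).eval t| + |(legendre (n-1)).eval t|) := hmono
      _ = M0 * ((∫ t in (-1:ℝ)..1, |(legendre (n+1)).eval t|)
          + ∫ t in (-1:ℝ)..1, |(legendre (n-1)).eval t|) := hsplit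
      _ ≤ M0 * (4 / Real.sqrt n) := by
          apply mul_le_mul_of_nonneg_left _ hM0nn
          have : (2:ℝ)/Real.sqrt n + 2/Real.sqrt n = 4/Real.sqrt n := by ring
          linarith
  have hrw : ((2 * (n : ℝ) + 1) / 2) * (∫ t in (-1:ℝ)..1, f t * (legendre n).eval t)
      = (1/2) * ((2*(n:ℝ)+1) * ∫ t in (-1:ℝ)..1, f t * (legendre n).eval t) := by ring
  rw [hrw, key]
  rw [abs_mul, abs_neg]
  have : |(1:ℝ)/2| = 1/2 := by norm_num
  rw [this]
  calc (1/2) * |∫ x in (-1:ℝ)..1, f' x * g.eval x|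
      ≤ (1/2) * (M0 * (4/Real.sqrt n)) := by linarith [final]
    _ = 2 * M0 / Real.sqrt n := by ring
end

section
/- If f : [-1,1] → ℝ is m-times continuously differentiable (m ≥ 1), then its Legendre coefficients c_n = ((2n+1)/2) ∫_{-1}^1 f(t) P_n(t) dt satisfy |c_n| ≤ C / n^{m − 1/2} for some constant C depending only on f, for all n ≥ 1. -/
open Polynomial

noncomputable def gd (n j : ℕ) : Polynomial ℝ := derivative^[j] (((X:Polynomial ℝ)^2-1)^n)

lemma gd_succ (n j : ℕ) : gd n (j+1) = derivative (gd n j) := by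
  simp [gd, Function.iterate_succ_apply']

lemma gd_factor (n : ℕ) : ∀ j, j ≤ n → ∃ q, gd n j = ((X:Polynomial ℝ)^2-1)^(n-j) * q := by
  intro j
  induction j with
  | zero => intro _; exact ⟨1, by simp [gd]⟩
  | succ j ih =>
    intro hj
    obtain ⟨q, hq⟩ := ih (Nat.le_of_succ_le hj)
    have h1 : n - j = (n - (j+1)) + 1 := by omega
    refine ⟨(C ((n - (j+1) + 1 : ℕ):ℝ)) * (2*X) * q + ((X:Polynomial ℝ)^2-1) * derivative q, ?_⟩
    rw [gd_succ, hq, h1]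
    simp only [derivative_mul, derivative_pow, derivative_sub, derivative_X_pow, derivative_one,
      Nat.add_sub_cancel, Nat.cast_pow, derivative_X, map_ofNat]
    push_cast
    have hC : (C (2:ℝ)) = 2 := map_ofNat C 2
    rw [hC]
    ring

lemma gd_eval_one (n j : ℕ) (h : j < n) : (gd n j).eval 1 = 0 := by
  obtain ⟨q, hq⟩ := gd_factor n j h.le
  have h0 : 0 < n - j := by omega
  simp [hq, zero_pow h0.ne']

lemma gd_eval_neg_one (n j : ℕ) (h : j < n) : (gd n j).eval (-1) = 0 := by
  obtain ⟨q, hq⟩ := gd_factor n j h.le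
  have h0 : 0 < n - j := by omega
  simp [hq, zero_pow h0.ne']

lemma poly_ftc (p : Polynomial ℝ) :
    ∫ t in (-1:ℝ)..1, (derivative p).eval t = p.eval 1 - p.eval (-1) := by
  have := intervalIntegral.integral_eq_sub_of_hasDerivAt (a := (-1:ℝ)) (b := 1)
    (f := fun x => p.eval x) (f' := fun x => (derivative p).eval x)
    (fun x _ => p.hasDerivAt x) ((Polynomial.continuous _).intervalIntegrable _ _)
  simpa using this

lemma gd_top (n : ℕ) :
    derivative^[2*n] (((X:Polynomial ℝ)^2-1)^n) = C ((2*n).factorial : ℝ) := by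
  have hexp : ((X:Polynomial ℝ)^2-1)^n
      = ∑ k ∈ Finset.range (n+1), C ((-1:ℝ)^(n-k) * (n.choose k : ℝ)) * X^(2*k) := by
    rw [sub_eq_add_neg, add_pow]
    refine Finset.sum_congr rfl fun k hk => ?_
    rw [← pow_mul]
    simp only [map_mul, map_pow, map_neg, map_one, map_natCast]
    ring
  rw [hexp]
  rw [iterate_derivative_sum]
  rw [Finset.sum_eq_single n]
  · simp only [iterate_derivative_C_mul, iterate_derivative_X_pow_eq_smul,
      Nat.descFactorial_self, Nat.sub_self, Nat.choose_self, pow_zero,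
      Polynomial.smul_eq_C_mul]
    simp
  · intro k hk hkn
    have hd : (X^(2*k) : Polynomial ℝ).natDegree < 2*n := by
      simp only [natDegree_X_pow]
      simp only [Finset.mem_range] at hk
      omega
    rw [iterate_derivative_C_mul, iterate_derivative_eq_zero hd, mul_zero]
  · intro h; exact absurd (Finset.self_mem_range_succ n) h

lemma wallis (n : ℕ) : ((2*n+1).factorial : ℝ) * ∫ t in (-1:ℝ)..1, (t^2-1)^n
    = (-1:ℝ)^n * 2 * 4^n * (n.factorial:ℝ)^2 := by
  induction n with
  | zero => norm_num
  | succ s ih =>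
    have hpoly : derivative ((X:Polynomial ℝ)*(X^2-1)^(s+1))
        = C (2*(s:ℝ)+3) * (X^2-1)^(s+1) + C (2*(s:ℝ)+2) * (X^2-1)^s := by
      simp only [derivative_mul, derivative_pow, derivative_sub, derivative_X_pow,
        derivative_one, derivative_X, Nat.add_sub_cancel, Nat.cast_add, Nat.cast_one]
      have hC : (C (2:ℝ)) = 2 := map_ofNat C 2
      have hC3 : (C (3:ℝ)) = 3 := map_ofNat C 3
      simp only [map_add, map_mul, map_one, map_natCast, hC, hC3]
      ring
    have h0 := poly_ftc ((X:Polynomial ℝ)*(X^2-1)^(s+1))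
    rw [hpoly] at h0
    have hsimp : ∀ t : ℝ, ((C (2*(s:ℝ)+3) * ((X:Polynomial ℝ)^2-1)^(s+1)
        + C (2*(s:ℝ)+2) * (X^2-1)^s)).eval t
        = (2*(s:ℝ)+3) * (t^2-1)^(s+1) + (2*(s:ℝ)+2) * (t^2-1)^s := by
      intro t; simp
    rw [intervalIntegral.integral_congr (fun t _ => hsimp t)] at h0
    have hi1 : IntervalIntegrable (fun t : ℝ => (2*(s:ℝ)+3) * (t^2-1)^(s+1))
        MeasureTheory.volume (-1) 1 := (Continuous.intervalIntegrable (by continuity) _ _)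
    have hi2 : IntervalIntegrable (fun t : ℝ => (2*(s:ℝ)+2) * (t^2-1)^s)
        MeasureTheory.volume (-1) 1 := (Continuous.intervalIntegrable (by continuity) _ _)
    rw [intervalIntegral.integral_add hi1 hi2, intervalIntegral.integral_const_mul,
      intervalIntegral.integral_const_mul] at h0
    simp only [eval_mul, eval_add, eval_pow, eval_sub, eval_X, eval_one, eval_C, one_pow] at h0
    norm_num at h0
    -- h0 : (2s+3) * W(s+1) + (2s+2) * W s = 0
    have hfac : ((2*(s+1)+1).factorial : ℝ) = (2*(s:ℝ)+3) * (2*(s:ℝ)+2) * ((2*s+1).factorial:ℝ) := by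
      have : 2*(s+1)+1 = (2*s+1) + 1 + 1 := by ring
      rw [this, Nat.factorial_succ, Nat.factorial_succ]
      push_cast; ring
    have hW : (2*(s:ℝ)+3) * ∫ t in (-1:ℝ)..1, (t^2-1)^(s+1)
        = -((2*(s:ℝ)+2) * ∫ t in (-1:ℝ)..1, (t^2-1)^s) := by linarith
    rw [hfac]
    calc (2*(s:ℝ)+3) * (2*(s:ℝ)+2) * ((2*s+1).factorial:ℝ) * ∫ t in (-1:ℝ)..1, (t^2-1)^(s+1)
        = (2*(s:ℝ)+2) * ((2*s+1).factorial:ℝ) * ((2*(s:ℝ)+3) * ∫ t in (-1:ℝ)..1, (t^2-1)^(s+1)) := by ring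
      _ = (2*(s:ℝ)+2) * ((2*s+1).factorial:ℝ) * (-((2*(s:ℝ)+2) * ∫ t in (-1:ℝ)..1, (t^2-1)^s)) := by rw [hW]
      _ = -(2*(s:ℝ)+2)^2 * (((2*s+1).factorial:ℝ) * ∫ t in (-1:ℝ)..1, (t^2-1)^s) := by ring
      _ = -(2*(s:ℝ)+2)^2 * ((-1:ℝ)^s * 2 * 4^s * (s.factorial:ℝ)^2) := by rw [ih]
      _ = (-1:ℝ)^(s+1) * 2 * 4^(s+1) * ((s+1).factorial:ℝ)^2 := by
          rw [Nat.factorial_succ]; push_cast; ring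

lemma Tstep (n i : ℕ) (hi : i < n) :
    ∫ t in (-1:ℝ)..1, (gd n (n+i)).eval t * (gd n (n-i)).eval t
    = - ∫ t in (-1:ℝ)..1, (gd n (n+i+1)).eval t * (gd n (n-i-1)).eval t := by
  have hsub : n - i = (n - i - 1) + 1 := by omega
  have hder : derivative (gd n (n+i) * gd n (n-i-1))
      = gd n (n+i+1) * gd n (n-i-1) + gd n (n+i) * gd n (n-i) := by
    rw [derivative_mul, ← gd_succ, hsub, ← gd_succ]
    simp [Nat.add_sub_cancel]
  have h0 := poly_ftc (gd n (n+i) * gd n (n-i-1))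
  rw [hder] at h0
  have hz1 : (gd n (n-i-1)).eval 1 = 0 := gd_eval_one n _ (by omega)
  have hz2 : (gd n (n-i-1)).eval (-1) = 0 := gd_eval_neg_one n _ (by omega)
  simp only [eval_mul, eval_add] at h0
  rw [hz1, hz2, mul_zero, mul_zero, sub_zero] at h0
  have hi1 : IntervalIntegrable (fun t : ℝ => (gd n (n+i+1)).eval t * (gd n (n-i-1)).eval t)
      MeasureTheory.volume (-1) 1 :=
    (((Polynomial.continuous _).mul (Polynomial.continuous _)).intervalIntegrable _ _)
  have hi2 : IntervalIntegrable (fun t : ℝ => (gd n (n+i)).eval t * (gd n (n-i)).eval t)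
      MeasureTheory.volume (-1) 1 :=
    (((Polynomial.continuous _).mul (Polynomial.continuous _)).intervalIntegrable _ _)
  rw [intervalIntegral.integral_add hi1 hi2] at h0
  linarith

lemma Ttel (n : ℕ) : ∀ i, i ≤ n →
    ∫ t in (-1:ℝ)..1, ((gd n n).eval t)^2
    = (-1:ℝ)^i * ∫ t in (-1:ℝ)..1, (gd n (n+i)).eval t * (gd n (n-i)).eval t := by
  intro i
  induction i with
  | zero => intro _; simp [sq]
  | succ i ih =>
    intro hi
    rw [ih (by omega), Tstep n i (by omega)]
    have : n - i - 1 = n - (i+1) := by omega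
    rw [this, pow_succ]
    ring

lemma I0_eq (n : ℕ) : (2*(n:ℝ)+1) * ∫ t in (-1:ℝ)..1, ((gd n n).eval t)^2
    = 2 * 4^n * ((n.factorial:ℝ))^2 := by
  have h := Ttel n n le_rfl
  rw [Nat.sub_self] at h
  have hgd0 : gd n 0 = ((X:Polynomial ℝ)^2-1)^n := rfl
  have hgdtop : gd n (n+n) = C (((2*n).factorial : ℝ)) := by
    rw [show n+n = 2*n by ring]; exact gd_top n
  rw [hgd0, hgdtop] at h
  have : ∫ t in (-1:ℝ)..1, (C (((2*n).factorial : ℝ))).eval t * ((((X:Polynomial ℝ)^2-1)^n)).eval t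
      = ((2*n).factorial : ℝ) * ∫ t in (-1:ℝ)..1, (t^2-1)^n := by
    rw [← intervalIntegral.integral_const_mul]
    apply intervalIntegral.integral_congr
    intro t _; simp
  rw [this] at h
  have hw := wallis n
  have hfac : ((2*n+1).factorial : ℝ) = (2*(n:ℝ)+1) * ((2*n).factorial : ℝ) := by
    rw [Nat.factorial_succ]; push_cast; ring
  rw [hfac] at hw
  -- h : I0 = (-1)^n * ((2n)! * W)
  -- hw : (2n+1) * ((2n)! * W) = (-1)^n * 2 * 4^n * (n!)^2
  rw [h]
  have hsq : ((-1:ℝ)^n)^2 = 1 := by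
    rw [← pow_mul, mul_comm, pow_mul]; norm_num
  linear_combination ((-1:ℝ)^n) * hw + (2*4^n*(n.factorial:ℝ)^2) * hsq

lemma ode_base (n : ℕ) : ((X:Polynomial ℝ)^2-1) * gd n 1 = C (2*(n:ℝ)) * X * gd n 0 := by
  cases n with
  | zero => simp [gd]
  | succ s =>
    show ((X:Polynomial ℝ)^2-1) * derivative (((X:Polynomial ℝ)^2-1)^(s+1)) = _
    have hgd0 : gd (s+1) 0 = ((X:Polynomial ℝ)^2-1)^(s+1) := rfl
    rw [hgd0]
    simp only [derivative_pow, derivative_sub, derivative_X_pow, derivative_one, derivative_X,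
      Nat.add_sub_cancel, Nat.cast_ofNat, Nat.cast_add, Nat.cast_one]
    have hC : (C (2:ℝ)) = 2 := map_ofNat C 2
    simp only [map_add, map_mul, map_one, map_natCast, hC]
    ring

lemma ode (n : ℕ) : ∀ j : ℕ, ((X:Polynomial ℝ)^2-1) * gd n (j+2)
    + C (2*((j:ℝ)+1-(n:ℝ))) * X * gd n (j+1) + C (((j:ℝ)+1)*((j:ℝ)-2*(n:ℝ))) * gd n j = 0 := by
  intro j
  induction j with
  | zero =>
    have dh := congrArg derivative (ode_base n)
    simp only [derivative_mul, derivative_sub, derivative_X_pow, derivative_one, derivative_X,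
      derivative_C, ← gd_succ, zero_mul, mul_one, zero_add] at dh
    have hC : (C (2:ℝ)) = 2 := map_ofNat C 2
    simp only [map_mul, map_add, map_sub, map_one, map_zero, map_natCast, hC, Nat.cast_zero] at dh ⊢
    norm_num at dh ⊢
    linear_combination dh
  | succ j ih =>
    have dh := congrArg derivative ih
    simp only [derivative_add, derivative_mul, derivative_sub, derivative_X_pow, derivative_one,
      derivative_X, derivative_C, ← gd_succ, zero_mul, mul_one, zero_add, map_zero] at dh
    have hC : (C (2:ℝ)) = 2 := map_ofNat C 2
    simp only [map_mul, map_add, map_sub, map_one, map_zero, map_natCast, hC, Nat.cast_succ] at dh ⊢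
    norm_num at dh ⊢
    push_cast at dh ⊢
    linear_combination dh

lemma chain (n k : ℕ) (hk : k + 1 ≤ n) :
    ((n:ℝ)*((n:ℝ)+1) - ((k:ℝ)+1)^2) * ∫ t in (-1:ℝ)..1, ((gd n (n-k-1)).eval t)^2
    ≤ ∫ t in (-1:ℝ)..1, ((gd n (n-k)).eval t)^2 := by
  set j := n - k - 1 with hj
  have hj1 : n - k = j + 1 := by omega
  have hj2 : j < n := by omega
  have hcast : ((j:ℕ):ℝ) = (n:ℝ) - (k:ℝ) - 1 := by
    rw [hj, show n - k - 1 = n - (k+1) from by omega, Nat.cast_sub (by omega : k+1 ≤ n)]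
    push_cast; ring
  have E := ode n j
  rw [hcast] at E
  set lam : ℝ := (n:ℝ)*((n:ℝ)+1) - ((k:ℝ)+1)^2 with hlam
  set F : Polynomial ℝ := ((X:Polynomial ℝ)^2-1) * gd n (j+1) * gd n j
      - C ((k:ℝ)+1) * X * (gd n j)^2 with hF
  have hdF : derivative F = ((X:Polynomial ℝ)^2-1) * (gd n (j+1))^2 + C lam * (gd n j)^2 := by
    rw [hF]
    simp only [derivative_sub, derivative_mul, derivative_pow, derivative_sub, derivative_X_pow,
      derivative_one, derivative_X, derivative_C, ← gd_succ, zero_mul, mul_one, zero_add,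
      zero_sub, sub_zero, Nat.add_sub_cancel]
    have hC : (C (2:ℝ)) = 2 := map_ofNat C 2
    simp only [map_mul, map_add, map_sub, map_one, map_zero, map_natCast, hC, hlam, pow_one]
    norm_num
    simp only [map_mul, map_add, map_sub, map_one, map_zero, map_natCast, hC] at E
    linear_combination (gd n j) * E
  -- integrate
  have h0 := poly_ftc F
  rw [hdF] at h0
  have hz1 : (gd n j).eval 1 = 0 := gd_eval_one n j hj2
  have hz2 : (gd n j).eval (-1) = 0 := gd_eval_neg_one n j hj2
  have hFz : F.eval 1 = 0 ∧ F.eval (-1) = 0 := by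
    constructor <;> simp [hF, hz1, hz2]
  rw [hFz.1, hFz.2, sub_zero] at h0
  have hi1 : IntervalIntegrable (fun t : ℝ => (t^2-1) * ((gd n (j+1)).eval t)^2)
      MeasureTheory.volume (-1) 1 :=
    (Continuous.intervalIntegrable (((continuous_pow 2).sub continuous_const).mul
      ((Polynomial.continuous _).pow 2)) _ _)
  have hi2 : IntervalIntegrable (fun t : ℝ => lam * ((gd n j).eval t)^2)
      MeasureTheory.volume (-1) 1 :=
    (Continuous.intervalIntegrable (continuous_const.mul ((Polynomial.continuous _).pow 2)) _ _)
  have hsplit : ∫ t in (-1:ℝ)..1, (((X:Polynomial ℝ)^2-1) * (gd n (j+1))^2 + C lam * (gd n j)^2).eval t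
      = (∫ t in (-1:ℝ)..1, (t^2-1) * ((gd n (j+1)).eval t)^2)
        + lam * ∫ t in (-1:ℝ)..1, ((gd n j).eval t)^2 := by
    rw [← intervalIntegral.integral_const_mul, ← intervalIntegral.integral_add hi1
      hi2]
    apply intervalIntegral.integral_congr
    intro t _
    simp
    try ring
  rw [hsplit] at h0
  -- h0 : ∫ (t²-1)u'² + lam ∫ u² = 0
  have hle : ∫ t in (-1:ℝ)..1, (1 - t^2) * ((gd n (j+1)).eval t)^2
      ≤ ∫ t in (-1:ℝ)..1, ((gd n (j+1)).eval t)^2 := by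
    apply intervalIntegral.integral_mono_on (by norm_num)
      (Continuous.intervalIntegrable ((continuous_const.sub (continuous_pow 2)).mul
        ((Polynomial.continuous _).pow 2)) _ _)
      (Continuous.intervalIntegrable ((Polynomial.continuous _).pow 2) _ _)
    intro t _
    show (1 - t^2) * ((gd n (j+1)).eval t)^2 ≤ ((gd n (j+1)).eval t)^2
    nlinarith [sq_nonneg t, sq_nonneg ((gd n (j+1)).eval t), sq_nonneg (t * (gd n (j+1)).eval t)]
  have hswap : ∫ t in (-1:ℝ)..1, (1 - t^2) * ((gd n (j+1)).eval t)^2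
      = - ∫ t in (-1:ℝ)..1, (t^2-1) * ((gd n (j+1)).eval t)^2 := by
    rw [← intervalIntegral.integral_neg]
    apply intervalIntegral.integral_congr
    intro t _; ring
  rw [hj1]
  calc lam * ∫ t in (-1:ℝ)..1, ((gd n j).eval t)^2
      = ∫ t in (-1:ℝ)..1, (1 - t^2) * ((gd n (j+1)).eval t)^2 := by
        rw [hswap]; linarith
    _ ≤ _ := hle

lemma parts (m : ℕ) (f : ℝ → ℝ) (hf : ContDiffOn ℝ m f (Set.Icc (-1 : ℝ) 1))
    (n : ℕ) (hn : m ≤ n) : ∀ j, j ≤ m →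
    ∫ t in (-1:ℝ)..1, f t * (gd n n).eval t
    = (-1:ℝ)^j * ∫ t in (-1:ℝ)..1,
        (iteratedDerivWithin j f (Set.Icc (-1 : ℝ) 1) t) * (gd n (n-j)).eval t := by
  set s : Set ℝ := Set.Icc (-1 : ℝ) 1 with hs
  have hsu : UniqueDiffOn ℝ s := uniqueDiffOn_Icc (by norm_num)
  have huIcc : Set.uIcc (-1:ℝ) 1 = s := Set.uIcc_of_le (by norm_num)
  intro j
  induction j with
  | zero => intro _; simp [iteratedDerivWithin_zero]
  | succ j ih =>
    intro hj
    have hjm : j < m := hj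
    rw [ih hjm.le]
    set u : ℝ → ℝ := iteratedDerivWithin j f s with hu
    set u' : ℝ → ℝ := iteratedDerivWithin (j+1) f s with hu'
    have hcu : ContinuousOn u s :=
      hf.continuousOn_iteratedDerivWithin (by exact_mod_cast hjm.le) hsu
    have hcu' : ContinuousOn u' s :=
      hf.continuousOn_iteratedDerivWithin (by exact_mod_cast hj) hsu
    have hdiff : DifferentiableOn ℝ u s :=
      hf.differentiableOn_iteratedDerivWithin (by exact_mod_cast hjm) hsu
    have hder : ∀ x ∈ Set.Ioo (-1:ℝ) 1, HasDerivAt u (u' x) x := by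
      intro x hx
      have hxs : x ∈ s := Set.Ioo_subset_Icc_self hx
      have h1 : HasDerivWithinAt u (derivWithin u s x) s x :=
        (hdiff x hxs).hasDerivWithinAt
      have h2 : derivWithin u s x = u' x :=
        (congrFun iteratedDerivWithin_succ x).symm
      rw [h2] at h1
      exact h1.hasDerivAt (Icc_mem_nhds hx.1 hx.2)
    have hsub : n - j = (n - (j+1)) + 1 := by omega
    have hderP : derivative (gd n (n-(j+1))) = gd n (n-j) := by
      rw [hsub, ← gd_succ]
    set P := gd n (n-(j+1)) with hP
    set G : ℝ → ℝ := fun x => u x * P.eval x with hG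
    have hGder : ∀ x ∈ Set.Ioo (-1:ℝ) 1,
        HasDerivWithinAt G (u' x * P.eval x + u x * (gd n (n-j)).eval x) (Set.Ioi x) x := by
      intro x hx
      have h := ((hder x hx).mul (P.hasDerivAt x))
      rw [hderP] at h
      exact h.hasDerivWithinAt
    have hGcont : ContinuousOn G s := hcu.mul (Polynomial.continuous P).continuousOn
    have hint : IntervalIntegrable
        (fun x => u' x * P.eval x + u x * (gd n (n-j)).eval x) MeasureTheory.volume (-1) 1 := by
      apply ContinuousOn.intervalIntegrable
      rw [huIcc]
      exact (hcu'.mul (Polynomial.continuous P).continuousOn).add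
        (hcu.mul (Polynomial.continuous _).continuousOn)
    have hftc := intervalIntegral.integral_eq_sub_of_hasDeriv_right_of_le (by norm_num)
      hGcont hGder hint
    have hz1 : P.eval 1 = 0 := gd_eval_one n _ (by omega)
    have hz2 : P.eval (-1) = 0 := gd_eval_neg_one n _ (by omega)
    rw [hG] at hftc
    simp only [hz1, hz2, mul_zero, sub_zero] at hftc
    have hint1 : IntervalIntegrable (fun x => u' x * P.eval x) MeasureTheory.volume (-1) 1 := by
      apply ContinuousOn.intervalIntegrable
      rw [huIcc]; exact hcu'.mul (Polynomial.continuous P).continuousOn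
    have hint2 : IntervalIntegrable (fun x => u x * (gd n (n-j)).eval x)
        MeasureTheory.volume (-1) 1 := by
      apply ContinuousOn.intervalIntegrable
      rw [huIcc]; exact hcu.mul (Polynomial.continuous _).continuousOn
    rw [intervalIntegral.integral_add hint1 hint2] at hftc
    have : ∫ t in (-1:ℝ)..1, u t * (gd n (n-j)).eval t
        = - ∫ t in (-1:ℝ)..1, u' t * P.eval t := by linarith
    rw [this, pow_succ]
    ring

lemma sq_nonneg_int (p : Polynomial ℝ) : 0 ≤ ∫ t in (-1:ℝ)..1, (p.eval t)^2 :=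
  intervalIntegral.integral_nonneg (by norm_num) (fun t _ => sq_nonneg _)

lemma l1_sq (p : Polynomial ℝ) :
    (∫ t in (-1:ℝ)..1, |p.eval t|)^2 ≤ 2 * ∫ t in (-1:ℝ)..1, (p.eval t)^2 := by
  set J := ∫ t in (-1:ℝ)..1, |p.eval t| with hJ
  set I := ∫ t in (-1:ℝ)..1, (p.eval t)^2 with hI
  have hI0 : 0 ≤ I := sq_nonneg_int p
  have hJ0 : 0 ≤ J :=
    intervalIntegral.integral_nonneg (by norm_num) (fun t _ => abs_nonneg _)
  have key : ∀ ε : ℝ, 0 < ε → J ≤ ε + I/(2*ε) := by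
    intro ε hε
    have hmono : J ≤ ∫ t in (-1:ℝ)..1, (ε/2 + (p.eval t)^2/(2*ε)) := by
      apply intervalIntegral.integral_mono_on (by norm_num)
        ((Polynomial.continuous p).abs.intervalIntegrable _ _)
        ((continuous_const.add (((Polynomial.continuous p).pow 2).div_const _)).intervalIntegrable _ _)
      intro t _
      have key2 : 2*ε*|p.eval t| ≤ ε^2 + (p.eval t)^2 := by
        nlinarith [sq_nonneg (|p.eval t| - ε), sq_abs (p.eval t)]
      calc |p.eval t| = (2*ε*|p.eval t|)/(2*ε) := by field_simp
        _ ≤ (ε^2 + (p.eval t)^2)/(2*ε) := by gcongr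
        _ = ε/2 + (p.eval t)^2/(2*ε) := by field_simp
    have hcalc : ∫ t in (-1:ℝ)..1, (ε/2 + (p.eval t)^2/(2*ε)) = ε + I/(2*ε) := by
      rw [intervalIntegral.integral_add (f := fun _ => ε/2) (g := fun t => (p.eval t)^2/(2*ε)) ((continuous_const).intervalIntegrable _ _)
        ((((Polynomial.continuous p).pow 2).div_const _).intervalIntegrable _ _)]
      have hdiv : ∫ t in (-1:ℝ)..1, (p.eval t)^2/(2*ε) = (∫ t in (-1:ℝ)..1, (p.eval t)^2)/(2*ε) :=
        intervalIntegral.integral_div _ _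
      rw [hdiv, intervalIntegral.integral_const, smul_eq_mul, ← hI]
      ring
    linarith [hmono.trans_eq hcalc]
  rcases eq_or_lt_of_le hJ0 with h | h
  · rw [← h]; norm_num; exact hI0
  · have hk := key (J/2) (by linarith)
    have h2 : (2:ℝ)*(J/2) = J := by ring
    rw [h2] at hk
    have h3 : J/2 ≤ I/J := by linarith
    rw [le_div_iff₀ h] at h3
    nlinarith

lemma Ichain (n M : ℕ) (hn : 2*M ≤ n) : ∀ k, k ≤ M →
    ∫ t in (-1:ℝ)..1, ((gd n (n-k)).eval t)^2
    ≤ (2/(n:ℝ)^2)^k * ∫ t in (-1:ℝ)..1, ((gd n n).eval t)^2 := by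
  intro k
  induction k with
  | zero => intro _; simp
  | succ k ih =>
    intro hk
    have hkM : k + 1 ≤ M := hk
    have hkn : k + 1 ≤ n := by omega
    have hch := chain n k hkn
    have hnpos : (0:ℝ) < n := by
      have : 0 < n := by omega
      exact_mod_cast this
    have hlam : (n:ℝ)^2/2 ≤ (n:ℝ)*((n:ℝ)+1) - ((k:ℝ)+1)^2 := by
      have h1 : ((k:ℝ)+1) ≤ (M:ℕ) := by exact_mod_cast hkM
      have h2 : 2*((M:ℕ):ℝ) ≤ (n:ℝ) := by exact_mod_cast hn
      have hM0 : (0:ℝ) ≤ ((M:ℕ):ℝ) := Nat.cast_nonneg _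
      nlinarith
    have hIk1 : 0 ≤ ∫ t in (-1:ℝ)..1, ((gd n (n-(k+1))).eval t)^2 := sq_nonneg_int _
    have hstep : ∫ t in (-1:ℝ)..1, ((gd n (n-(k+1))).eval t)^2
        ≤ (2/(n:ℝ)^2) * ∫ t in (-1:ℝ)..1, ((gd n (n-k)).eval t)^2 := by
      have heq : n - k - 1 = n - (k+1) := by omega
      rw [heq] at hch
      rw [div_mul_eq_mul_div, le_div_iff₀ (by positivity)]
      nlinarith [hch, hIk1]
    calc ∫ t in (-1:ℝ)..1, ((gd n (n-(k+1))).eval t)^2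
        ≤ (2/(n:ℝ)^2) * ∫ t in (-1:ℝ)..1, ((gd n (n-k)).eval t)^2 := hstep
      _ ≤ (2/(n:ℝ)^2) * ((2/(n:ℝ)^2)^k * ∫ t in (-1:ℝ)..1, ((gd n n).eval t)^2) := by
          have := ih (by omega)
          have h2 : (0:ℝ) ≤ 2/(n:ℝ)^2 := by positivity
          nlinarith [this]
      _ = (2/(n:ℝ)^2)^(k+1) * ∫ t in (-1:ℝ)..1, ((gd n n).eval t)^2 := by ring


set_option maxHeartbeats 1600000

/-- If `f` is Cᵐ on `[-1,1]` with `m ≥ 1`, then its Legendre coefficients satisfy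
`|cₙ| ≤ C / n^{m - 1/2}`. -/
theorem legendre_coeff_decay_Cm (m : ℕ) (hm : 1 ≤ m) (f : ℝ → ℝ)
    (hf : ContDiffOn ℝ m f (Set.Icc (-1 : ℝ) 1)) :
    ∃ C : ℝ, ∀ n : ℕ, 1 ≤ n →
      |((2 * (n : ℝ) + 1) / 2) * ∫ t in (-1 : ℝ)..1, f t * (legendre n).eval t|
        ≤ C / (n : ℝ) ^ ((m : ℝ) - 1 / 2) := by
  have hsu : UniqueDiffOn ℝ (Set.Icc (-1:ℝ) 1) := uniqueDiffOn_Icc (by norm_num)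
  have huIcc : Set.uIcc (-1:ℝ) 1 = Set.Icc (-1:ℝ) 1 := Set.uIcc_of_le (by norm_num)
  set F : ℝ → ℝ := iteratedDerivWithin m f (Set.Icc (-1:ℝ) 1) with hFdef
  have hFcont : ContinuousOn F (Set.Icc (-1:ℝ) 1) :=
    hf.continuousOn_iteratedDerivWithin (le_refl _) hsu
  obtain ⟨M, hM⟩ := isCompact_Icc.exists_bound_of_continuousOn hFcont
  have hM0 : 0 ≤ M := le_trans (norm_nonneg _) (hM 0 (by norm_num))
  set C1 : ℝ := 3 * 2^m * (M+1) with hC1def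
  have hC1pos : 0 < C1 := by positivity
  have hne : (Finset.Ico 1 (2*m)).Nonempty := ⟨1, by simp; omega⟩
  set C0 : ℝ := (Finset.Ico 1 (2*m)).sup' hne
    (fun k : ℕ => |((2 * (k : ℝ) + 1) / 2) * ∫ t in (-1 : ℝ)..1, f t * (legendre k).eval t|
      * (k:ℝ)^((m:ℝ)-1/2)) with hC0def
  refine ⟨max C1 C0, fun n hn => ?_⟩
  have hnR : (0:ℝ) < n := by exact_mod_cast hn
  have hrpos : (0:ℝ) < (n:ℝ)^((m:ℝ)-1/2) := Real.rpow_pos_of_pos hnR _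
  by_cases hcase : n < 2*m
  · rw [le_div_iff₀ hrpos]
    calc |((2 * (n : ℝ) + 1) / 2) * ∫ t in (-1 : ℝ)..1, f t * (legendre n).eval t|
          * (n:ℝ)^((m:ℝ)-1/2)
        ≤ C0 := Finset.le_sup'
            (fun k : ℕ => |((2 * (k : ℝ) + 1) / 2) * ∫ t in (-1 : ℝ)..1, f t * (legendre k).eval t|
              * (k:ℝ)^((m:ℝ)-1/2)) (Finset.mem_Ico.mpr ⟨hn, hcase⟩)
      _ ≤ max C1 C0 := le_max_right _ _
  · push_neg at hcase
    have hmn : m ≤ n := by omega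
    set K : ℝ := 2^n * (n.factorial : ℝ) with hKdef
    have hKpos : (0:ℝ) < K := by positivity
    set A : ℝ := ∫ t in (-1:ℝ)..1, f t * (gd n n).eval t with hAdef
    set q : Polynomial ℝ := gd n (n-m) with hqdef
    set J : ℝ := ∫ t in (-1:ℝ)..1, |q.eval t| with hJdef
    set Im : ℝ := ∫ t in (-1:ℝ)..1, (q.eval t)^2 with hImdef
    set I0 : ℝ := ∫ t in (-1:ℝ)..1, ((gd n n).eval t)^2 with hI0def
    -- step 1 : rewrite the coefficient
    have h1 : ∫ t in (-1:ℝ)..1, f t * (legendre n).eval t = (1/K) * A := by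
      rw [hAdef, ← intervalIntegral.integral_const_mul]
      apply intervalIntegral.integral_congr
      intro t _
      simp only [legendre, eval_mul, eval_C]
      show f t * (1 / (2 ^ n * n.factorial : ℝ) * (gd n n).eval t) = _
      rw [hKdef]; ring
    -- step 2 : |A| ≤ M * J
    have h2 : |A| ≤ M * J := by
      have hparts := parts m f hf n hmn m le_rfl
      rw [← hAdef] at hparts
      have habs : |A| = |∫ t in (-1:ℝ)..1, F t * q.eval t| := by
        rw [hparts, abs_mul, abs_pow, abs_neg, abs_one, one_pow, one_mul]
      rw [habs]
      calc |∫ t in (-1:ℝ)..1, F t * q.eval t|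
          ≤ ∫ t in (-1:ℝ)..1, |F t * q.eval t| :=
            intervalIntegral.abs_integral_le_integral_abs (by norm_num)
        _ ≤ ∫ t in (-1:ℝ)..1, M * |q.eval t| := by
            apply intervalIntegral.integral_mono_on (by norm_num)
            · apply ContinuousOn.intervalIntegrable
              rw [huIcc]
              exact (hFcont.mul (Polynomial.continuous q).continuousOn).abs
            · exact ((continuous_const.mul (Polynomial.continuous q).abs).intervalIntegrable _ _)
            · intro t ht
              rw [abs_mul]
              exact mul_le_mul_of_nonneg_right
                ((Real.norm_eq_abs _ ▸ hM t ht)) (abs_nonneg _)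
        _ = M * J := by rw [hJdef, intervalIntegral.integral_const_mul]
    -- step 3,4,5
    have h3 : J^2 ≤ 2 * Im := l1_sq q
    have h4 : Im ≤ (2/(n:ℝ)^2)^m * I0 := Ichain n m hcase m le_rfl
    have h5 : (2*(n:ℝ)+1) * I0 = 2 * 4^n * ((n.factorial:ℝ))^2 := I0_eq n
    have hI0nn : 0 ≤ I0 := sq_nonneg_int _
    have hImnn : 0 ≤ Im := sq_nonneg_int _
    have hJnn : 0 ≤ J :=
      intervalIntegral.integral_nonneg (by norm_num) (fun t _ => abs_nonneg _)
    have hK2 : K^2 = 4^n * ((n.factorial:ℝ))^2 := by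
      rw [hKdef]; rw [mul_pow, ← pow_mul, mul_comm n 2, pow_mul]; norm_num
    have h5' : I0 ≤ K^2 / n := by
      rw [le_div_iff₀ hnR, hK2]
      nlinarith [h5, hI0nn]
    -- squared chain
    have hsqA : |A|^2 ≤ M^2 * (2 * ((2/(n:ℝ)^2)^m * (K^2/n))) := by
      have e1 : |A|^2 ≤ (M*J)^2 := pow_le_pow_left₀ (abs_nonneg _) h2 2
      have e2 : (M*J)^2 = M^2 * J^2 := by ring
      have e3 : M^2 * J^2 ≤ M^2 * (2*Im) :=
        mul_le_mul_of_nonneg_left h3 (sq_nonneg M)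
      have e4 : M^2 * (2*Im) ≤ M^2 * (2*((2/(n:ℝ)^2)^m * I0)) :=
        mul_le_mul_of_nonneg_left
          (mul_le_mul_of_nonneg_left h4 (by norm_num)) (sq_nonneg M)
      have e5 : M^2 * (2*((2/(n:ℝ)^2)^m * I0)) ≤ M^2 * (2*((2/(n:ℝ)^2)^m * (K^2/n))) := by
        have hp : (0:ℝ) ≤ (2/(n:ℝ)^2)^m := by positivity
        exact mul_le_mul_of_nonneg_left
          (mul_le_mul_of_nonneg_left
            (mul_le_mul_of_nonneg_left h5' hp) (by norm_num)) (sq_nonneg M)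
      linarith [e1.trans_eq e2, e3, e4, e5]
    -- the |c_n| value
    have hcval : |((2 * (n : ℝ) + 1) / 2) * ∫ t in (-1 : ℝ)..1, f t * (legendre n).eval t|
        = ((2*(n:ℝ)+1)/2) * (1/K) * |A| := by
      rw [h1, ← mul_assoc, abs_mul]
      congr 1
      rw [abs_of_pos]
      positivity
    rw [hcval]
    -- final numeric computation
    have hn1R : (1:ℝ) ≤ n := by exact_mod_cast hn
    have hC1le : C1 ≤ max C1 C0 := le_max_left _ _
    have hCpos : 0 < max C1 C0 := lt_of_lt_of_le hC1pos hC1le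
    have hcast : ((2*m-1 : ℕ):ℝ) = 2*(m:ℝ)-1 := by
      push_cast [Nat.cast_sub (by omega : 1 ≤ 2*m)]; ring
    have hr2 : ((n:ℝ)^((m:ℝ)-1/2))^2 = (n:ℝ)^(2*m-1 : ℕ) := by
      rw [sq, ← Real.rpow_add hnR, ← Real.rpow_natCast (n:ℝ) (2*m-1), hcast]
      norm_num
      ring_nf
    refine (pow_le_pow_iff_left₀ (by positivity)
      (div_nonneg hCpos.le hrpos.le) (two_ne_zero)).mp ?_
    rw [div_pow, hr2]
    have hstep0 : (((2*(n:ℝ)+1)/2) * (1/K) * |A|)^2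
        = ((2*(n:ℝ)+1)/2)^2 * (1/K)^2 * |A|^2 := by ring
    have hstep1 : ((2*(n:ℝ)+1)/2)^2 * (1/K)^2 * |A|^2
        ≤ ((2*(n:ℝ)+1)/2)^2 * (1/K)^2 * (M^2 * (2 * ((2/(n:ℝ)^2)^m * (K^2/n)))) :=
      mul_le_mul_of_nonneg_left hsqA (by positivity)
    have hsimp : ((2*(n:ℝ)+1)/2)^2 * (1/K)^2 * (M^2 * (2 * ((2/(n:ℝ)^2)^m * (K^2/n))))
        = (2*(n:ℝ)+1)^2 * M^2 * 2^(m+1) / (4 * (n:ℝ)^(2*m+1)) := by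
      have hpm : (2/(n:ℝ)^2)^m = 2^m/(n:ℝ)^(2*m) := by
        rw [div_pow, ← pow_mul]
      rw [hpm]
      field_simp
      ring
    have hnum : (2*(n:ℝ)+1)^2 * M^2 * 2^(m+1) ≤ (max C1 C0)^2 * 4 * (n:ℝ)^2 := by
      have hb2 : (2*(n:ℝ)+1)^2 ≤ 9*(n:ℝ)^2 := by
        calc (2*(n:ℝ)+1)^2 ≤ (3*(n:ℝ))^2 := pow_le_pow_left₀ (by linarith) (by linarith) 2
          _ = 9*(n:ℝ)^2 := by ring
      have hM2 : M^2 ≤ (M+1)^2 := pow_le_pow_left₀ hM0 (by linarith) 2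
      have ht1 : (1:ℝ) ≤ 2^m := one_le_pow₀ (by norm_num)
      have hC2 : C1^2 ≤ (max C1 C0)^2 := pow_le_pow_left₀ hC1pos.le hC1le 2
      have step1 : (2*(n:ℝ)+1)^2*M^2*2^(m+1) ≤ (9*(n:ℝ)^2)*((M+1)^2)*2^(m+1) := by
        apply mul_le_mul_of_nonneg_right _ (by positivity)
        exact mul_le_mul hb2 hM2 (sq_nonneg M) (by positivity)
      have step2 : (9*(n:ℝ)^2)*((M+1)^2)*2^(m+1) ≤ C1^2*4*(n:ℝ)^2 := by
        have he : C1^2*4*(n:ℝ)^2 = 36*((2:ℝ)^m*2^m)*((M+1)^2*(n:ℝ)^2) := by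
          rw [hC1def]; ring
        have h2e : (2:ℝ)^(m+1) = 2*2^m := by rw [pow_succ]; ring
        rw [he, h2e]
        have key : (2:ℝ)*2^m ≤ 4*((2:ℝ)^m*2^m) := by
          have h24 : (2:ℝ) ≤ 4*2^m := by
            have : (4:ℝ)*1 ≤ 4*2^m := by
              apply mul_le_mul_of_nonneg_left ht1 (by norm_num)
            linarith
          calc (2:ℝ)*2^m ≤ (4*2^m)*2^m :=
                mul_le_mul_of_nonneg_right h24 (by positivity)
            _ = 4*((2:ℝ)^m*2^m) := by ring
        calc 9*(n:ℝ)^2*(M+1)^2*(2*2^m)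
            = (9*((M+1)^2*(n:ℝ)^2))*((2:ℝ)*2^m) := by ring
          _ ≤ (9*((M+1)^2*(n:ℝ)^2))*(4*((2:ℝ)^m*2^m)) :=
              mul_le_mul_of_nonneg_left key (by positivity)
          _ = 36*((2:ℝ)^m*2^m)*((M+1)^2*(n:ℝ)^2) := by ring
      have step3 : C1^2*4*(n:ℝ)^2 ≤ (max C1 C0)^2*4*(n:ℝ)^2 := by
        apply mul_le_mul_of_nonneg_right _ (sq_nonneg (n:ℝ))
        exact mul_le_mul_of_nonneg_right hC2 (by norm_num)
      linarith
    calc (((2*(n:ℝ)+1)/2) * (1/K) * |A|)^2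
        ≤ ((2*(n:ℝ)+1)/2)^2 * (1/K)^2 * (M^2 * (2 * ((2/(n:ℝ)^2)^m * (K^2/n)))) := by
          rw [hstep0]; exact hstep1
      _ = (2*(n:ℝ)+1)^2 * M^2 * 2^(m+1) / (4 * (n:ℝ)^(2*m+1)) := hsimp
      _ ≤ (max C1 C0)^2 / (n:ℝ)^(2*m-1 : ℕ) := by
          rw [div_le_div_iff₀ (by positivity) (by positivity)]
          have hnp : (n:ℝ)^(2*m+1) = (n:ℝ)^(2*m-1 : ℕ) * (n:ℝ)^2 := by
            rw [← pow_add]; congr 1; omega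
          calc (2*(n:ℝ)+1)^2*M^2*2^(m+1) * (n:ℝ)^(2*m-1 : ℕ)
              ≤ ((max C1 C0)^2*4*(n:ℝ)^2) * (n:ℝ)^(2*m-1 : ℕ) :=
                mul_le_mul_of_nonneg_right hnum (by positivity)
            _ = (max C1 C0)^2 * (4 * (n:ℝ)^(2*m+1)) := by rw [hnp]; ring
end
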